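/- arXiv:2403.13889 — 6 statements merged into one kernel-verified Lean document; each statement's English description precedes it below -/
import Mathlib

section
/- Let A be a continuous map from ℝ into a unital Banach algebra 𝒜, let t_0 ∈ ℝ, h ≥ 0, and n ≥ 1. Then the n-th Mielnik–Plebański term satisfies ‖Ω_n(t_0,h)‖ ≤ (1/n) · (∫_{t_0}^{t_0+h} ‖A(τ)‖ dτ)^n. -/
open scoped Nat
open MeasureTheory

/-! Since `Θ! (n-1-Θ)!` divides `(n-1)!`, the kernel is bounded by `(n-1)!/n! = 1/n` in absolute
value, and submultiplicativity bounds the ordered product by `∏ ‖A(tᵢ)‖`. The integral of that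
product over the cube factorizes by Fubini into `(∫ ‖A‖)ⁿ`. -/

/-- `Θₙ(t) = θ(tₙ > tₙ₋₁) + ⋯ + θ(t₂ > t₁)` (here `t i` represents `t_{i+1}`). -/
noncomputable def MagnusTheta (n : ℕ) (t : Fin n → ℝ) : ℕ :=
  ∑ i : Fin n, if h : (i : ℕ) + 1 < n then (if t i < t ⟨(i : ℕ) + 1, h⟩ then 1 else 0) else 0

/-- The Mielnik–Plebański kernel `Lₙ(tₙ, …, t₁)`. -/
noncomputable def MPKernel (n : ℕ) (t : Fin n → ℝ) : ℝ :=
  (-1 : ℝ) ^ (n - 1 - MagnusTheta n t) * (MagnusTheta n t)! * ((n - 1 - MagnusTheta n t)! : ℝ)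
    / (n ! : ℝ)

/-- The `n`-th Mielnik–Plebański term of the Magnus expansion:
`Ωₙ(t₀,h) = ∫_{[t₀,t₀+h]ⁿ} Lₙ(tₙ,…,t₁) A(tₙ)⋯A(t₁) dt₁⋯dtₙ`
(an `n`-fold Bochner integral over the cube `[t₀, t₀+h]ⁿ`). -/
noncomputable def MagnusTerm {𝒜 : Type*} [NormedRing 𝒜] [NormedAlgebra ℝ 𝒜] [CompleteSpace 𝒜]
    (A : ℝ → 𝒜) (t₀ h : ℝ) (n : ℕ) : 𝒜 :=
  ∫ t : Fin n → ℝ in Set.univ.pi (fun _ => Set.Icc t₀ (t₀ + h)),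
    MPKernel n t • ((List.ofFn fun i : Fin n => A (t i)).reverse).prod

theorem Nat.factorial_mul_factorial_le_factorial {n k : ℕ} (hk : k ≤ n) :
    k ! * (n - k)! ≤ n ! :=
  Nat.le_of_dvd n.factorial_pos (Nat.factorial_mul_factorial_dvd_factorial hk)

theorem MagnusTheta_le (n : ℕ) (t : Fin n → ℝ) : MagnusTheta n t ≤ n - 1 := by
  cases n with
  | zero => simp [MagnusTheta]
  | succ m =>
    rw [MagnusTheta, Fin.sum_univ_castSucc, dif_neg (by simp)]
    calc _ ≤ ∑ _i : Fin m, 1 + 0 := by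
          gcongr with i
          simp only [Fin.val_castSucc, dif_pos (Nat.succ_lt_succ i.isLt)]
          split <;> omega
      _ = m + 1 - 1 := by simp

theorem abs_MPKernel_le {n : ℕ} (hn : n ≠ 0) (t : Fin n → ℝ) : |MPKernel n t| ≤ 1 / n := by
  set k := MagnusTheta n t
  have hk : |MPKernel n t| = ((k ! * (n - 1 - k)! : ℕ) : ℝ) / n ! := by
    simp [MPKernel, k, abs_div, abs_mul]
  rw [hk, div_le_div_iff₀ (by positivity) (by positivity), one_mul,
    ← Nat.mul_factorial_pred hn]
  push_cast
  rw [mul_comm (n : ℝ)]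
  gcongr
  exact_mod_cast Nat.factorial_mul_factorial_le_factorial (MagnusTheta_le n t)

theorem norm_prod_reverse_ofFn_le {R : Type*} [SeminormedRing R] {n : ℕ} (hn : n ≠ 0)
    (f : Fin n → R) : ‖(List.ofFn f).reverse.prod‖ ≤ ∏ i, ‖f i‖ := by
  refine (List.norm_prod_le' (by simpa using hn)).trans_eq ?_
  simp [List.map_reverse, List.prod_reverse, List.map_ofFn, List.prod_ofFn]

theorem setIntegral_univ_pi_prod_eq_pow {ι E 𝕜 : Type*} [Fintype ι] [RCLike 𝕜]
    [MeasurableSpace E] (μ : Measure E) [SigmaFinite μ] (s : Set E) (f : E → 𝕜) :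
    ∫ x in Set.univ.pi (fun _ : ι => s), ∏ i, f (x i) ∂(Measure.pi fun _ => μ)
      = (∫ x in s, f x ∂μ) ^ Fintype.card ι := by
  rw [Measure.restrict_pi_pi, integral_fintype_prod_eq_pow]

/-- For a continuous map `A` into a unital Banach algebra, `t₀ ∈ ℝ`, `h ≥ 0` and `n ≥ 1`,
the `n`-th Mielnik–Plebański term satisfies
`‖Ωₙ(t₀,h)‖ ≤ (1/n) · (∫_{t₀}^{t₀+h} ‖A(τ)‖ dτ)ⁿ`. -/
theorem MagnusTerm_norm_le {𝒜 : Type*} [NormedRing 𝒜] [NormedAlgebra ℝ 𝒜] [CompleteSpace 𝒜]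
    (A : ℝ → 𝒜) (hA : Continuous A) (t₀ h : ℝ) (hh : 0 ≤ h) (n : ℕ) (hn : 1 ≤ n) :
    ‖MagnusTerm A t₀ h n‖ ≤ (1 / n) * (∫ τ in t₀..(t₀ + h), ‖A τ‖) ^ n := by
  have hn0 : n ≠ 0 := Nat.one_le_iff_ne_zero.mp hn
  have hbound : IntegrableOn (fun t : Fin n → ℝ => (1 / n : ℝ) * ∏ i, ‖A (t i)‖)
      (Set.univ.pi fun _ => Set.Icc t₀ (t₀ + h)) :=
    (by fun_prop : Continuous fun t : Fin n → ℝ => (1 / n : ℝ) * ∏ i, ‖A (t i)‖).continuousOn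
      |>.integrableOn_compact (isCompact_univ_pi fun _ => isCompact_Icc)
  have hpointwise (t : Fin n → ℝ) :
      ‖MPKernel n t • (List.ofFn fun i => A (t i)).reverse.prod‖ ≤ 1 / n * ∏ i, ‖A (t i)‖ := by
    rw [norm_smul, Real.norm_eq_abs]
    exact mul_le_mul (abs_MPKernel_le hn0 t) (norm_prod_reverse_ofFn_le hn0 _)
      (norm_nonneg _) (by positivity)
  calc ‖MagnusTerm A t₀ h n‖
      ≤ ∫ t in Set.univ.pi fun _ => Set.Icc t₀ (t₀ + h), 1 / n * ∏ i, ‖A (t i)‖ :=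
        norm_integral_le_of_norm_le hbound (ae_of_all _ hpointwise)
    _ = 1 / n * (∫ τ in Set.Icc t₀ (t₀ + h), ‖A τ‖) ^ n := by
        rw [integral_const_mul, volume_pi, setIntegral_univ_pi_prod_eq_pow volume _ fun τ => ‖A τ‖,
          Fintype.card_fin]
    _ = 1 / n * (∫ τ in t₀..(t₀ + h), ‖A τ‖) ^ n := by
        rw [intervalIntegral.integral_of_le (by linarith), integral_Icc_eq_integral_Ioc]
end

section
/- Let 𝒜 be a unital Banach algebra, let a_0, a_1, a_2, … ∈ 𝒜 with ‖a_i‖ ≤ c for all i, let 0 ≤ h < 2, and suppose A : ℝ → 𝒜 satisfies A(τ) = Σ_{i=0}^∞ a_i (τ − (t_0 + h/2))^i for τ ∈ [t_0, t_0+h]. If the right-hand side below converges, then the Mielnik–Plebański series satisfies Σ_{n=1}^∞ ‖Ω_n(t_0,h)‖ ≤ Σ_{k=1}^∞ (h/2)^k Σ_{j ∈ C(k)} ((2c)^{dim j} / dim j) Π_{i=1}^{dim j} (1/j_i). -/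
open scoped Nat
open MeasureTheory

/-! ### Auxiliary lemmas -/

open scoped ENNReal NNReal

theorem magnus_lintegral_pi_pow {n : ℕ} (μ : Measure ℝ) [SigmaFinite μ] (g : ℝ → ℝ≥0∞)
    (hg : Measurable g) :
    ∫⁻ x : Fin n → ℝ, ∏ i, g (x i) ∂(Measure.pi fun _ => μ) = (∫⁻ y, g y ∂μ) ^ n := by
  induction n with
  | zero => simp [Measure.pi_empty_univ]
  | succ n ih =>
    have hmp := (measurePreserving_piFinSuccAbove (fun _ : Fin (n+1) => μ) 0).symm
    rw [← hmp.map_eq, lintegral_map_equiv]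
    simp_rw [MeasurableEquiv.piFinSuccAbove_symm_apply, Fin.insertNthEquiv,
      Fin.prod_univ_succ, Fin.insertNth_zero, Equiv.coe_fn_mk, Fin.cons_succ, Fin.cons_zero]
    simp only [cast_eq]
    rw [lintegral_prod_mul (f := g) (g := fun y : Fin n → ℝ => ∏ x, g (y x)) hg.aemeasurable
      (Finset.measurable_prod Finset.univ fun i _ =>
        hg.comp (measurable_pi_apply i)).aemeasurable,
      ih, pow_succ, mul_comm]

theorem magnusTheta_le (n : ℕ) (t : Fin (n+1) → ℝ) : MagnusTheta (n+1) t ≤ n := by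
  unfold MagnusTheta
  calc ∑ i : Fin (n+1), (if h : (i : ℕ) + 1 < n+1 then
        (if t i < t ⟨(i : ℕ) + 1, h⟩ then 1 else 0) else 0)
      ≤ ∑ i : Fin (n+1), (if (i : ℕ) + 1 < n+1 then 1 else 0) := by
        apply Finset.sum_le_sum
        intro i _
        split
        · split <;> simp
        · simp
    _ = n := by
        rw [Fin.sum_univ_castSucc]
        simp [Fin.is_lt]

theorem mpkernel_abs_le (n : ℕ) (t : Fin (n+1) → ℝ) : |MPKernel (n+1) t| ≤ 1 / (n+1 : ℝ) := by
  unfold MPKernel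
  have hθ := magnusTheta_le n t
  set θ := MagnusTheta (n+1) t
  have h1 : (n+1) - 1 - θ = n - θ := by omega
  rw [h1, abs_div, abs_mul, abs_mul, abs_pow, abs_neg, abs_one, one_pow, one_mul]
  have h2 : (θ ! : ℝ) * (n - θ)! ≤ (n ! : ℝ) := by
    have := Nat.factorial_mul_factorial_dvd_factorial hθ
    exact_mod_cast Nat.le_of_dvd (Nat.factorial_pos n) this
  rw [abs_of_nonneg (a := ((θ)! : ℝ)) (by positivity), abs_of_nonneg (by positivity),
    abs_of_nonneg (a := (((n+1))! : ℝ)) (by positivity)]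
  rw [div_le_div_iff₀ (by positivity) (by positivity)]
  calc (θ ! : ℝ) * (n - θ)! * (n+1) ≤ (n ! : ℝ) * (n+1) := by nlinarith [h2]
    _ = 1 * (n+1)! := by push_cast [Nat.factorial_succ]; ring

theorem magnus_ennreal_tsum_pow (w : ℕ → ℝ≥0∞) (z : ℕ) :
    (∑' m, w m) ^ z = ∑' f : Fin z → ℕ, ∏ i, w (f i) := by
  induction z with
  | zero =>
    rw [pow_zero, tsum_eq_single (fun i : Fin 0 => 0)]
    · simp
    · intro f hf; exact absurd (Subsingleton.elim _ _) hf
  | succ z ih =>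
    calc (∑' m, w m) ^ (z+1) = ∑' m, w m * ∑' f : Fin z → ℕ, ∏ i, w (f i) := by
          rw [pow_succ, ih, mul_comm, ENNReal.tsum_mul_right]
      _ = ∑' m, ∑' f : Fin z → ℕ, w m * ∏ i, w (f i) := by
          congr 1; ext m; rw [ENNReal.tsum_mul_left]
      _ = ∑' c : ℕ × (Fin z → ℕ), w c.1 * ∏ i, w (c.2 i) :=
          (ENNReal.tsum_prod (f := fun m (f : Fin z → ℕ) => w m * ∏ i, w (f i))).symm
      _ = ∑' c : ℕ × (Fin z → ℕ), ∏ i : Fin (z+1),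
            w ((Fin.consEquiv (fun _ : Fin (z+1) => ℕ)) c i) := by
          congr 1; ext c
          simp [Fin.prod_univ_succ]
      _ = ∑' f : Fin (z+1) → ℕ, ∏ i, w (f i) :=
          (Fin.consEquiv (fun _ : Fin (z+1) => ℕ)).tsum_eq (fun f : Fin (z+1) → ℕ => ∏ i, w (f i))

theorem magnus_sum_succ_pos {z : ℕ} (f : Fin (z+1) → ℕ) : 1 ≤ ∑ i, (f i + 1) := by
  have : ∑ i : Fin (z+1), (f i + 1) = (∑ i, f i) + (z+1) := by
    rw [Finset.sum_add_distrib]; simp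
  omega

/-- The injection from pairs `(z, f)` into compositions of positive integers. -/
def magnusι (p : Σ z : ℕ, (Fin (z+1) → ℕ)) : Σ k : ℕ, Composition (k+1) :=
  ⟨(∑ i, (p.2 i + 1)) - 1,
   ⟨List.ofFn (fun i => p.2 i + 1),
    by intro i hi
       simp only [List.mem_ofFn, Set.mem_range] at hi
       obtain ⟨j, hj⟩ := hi
       omega,
    by rw [List.sum_ofFn]
       have := magnus_sum_succ_pos p.2
       omega⟩⟩

theorem magnusι_blocks (p : Σ z : ℕ, (Fin (z+1) → ℕ)) :
    (magnusι p).2.blocks = List.ofFn (fun i => p.2 i + 1) := rfl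

theorem magnusι_fst (p : Σ z : ℕ, (Fin (z+1) → ℕ)) :
    (magnusι p).1 + 1 = ∑ i, (p.2 i + 1) := by
  have := magnus_sum_succ_pos p.2
  show (∑ i, (p.2 i + 1)) - 1 + 1 = _
  omega

theorem magnusι_injective : Function.Injective magnusι := by
  rintro ⟨z, f⟩ ⟨z', f'⟩ hpq
  have hb : (magnusι ⟨z, f⟩).2.blocks = (magnusι ⟨z', f'⟩).2.blocks := by rw [hpq]
  rw [magnusι_blocks, magnusι_blocks] at hb
  have hlen : z + 1 = z' + 1 := by
    have := congrArg List.length hb; simpa using this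
  obtain rfl : z = z' := by omega
  rw [List.ofFn_inj] at hb
  have : f = f' := by funext i; exact Nat.add_right_cancel (congrFun hb i)
  rw [this]

theorem magnus_comp_prod_blocksFun {n m : ℕ} (j : Composition n) (f : Fin m → ℕ)
    (hb : j.blocks = List.ofFn f) {M : Type*} [CommMonoid M] (g : ℕ → M) :
    ∏ i, g (j.blocksFun i) = ∏ i, g (f i) := by
  calc ∏ i, g (j.blocksFun i) = (List.ofFn (g ∘ j.blocksFun)).prod := by
        rw [List.prod_ofFn]; rfl
    _ = ((List.ofFn j.blocksFun).map g).prod := by rw [List.map_ofFn]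
    _ = ((List.ofFn f).map g).prod := by rw [j.ofFn_blocksFun, hb]
    _ = (List.ofFn (g ∘ f)).prod := by rw [List.map_ofFn]
    _ = ∏ i, g (f i) := by rw [List.prod_ofFn]; rfl

theorem magnus_comp_length {n m : ℕ} (j : Composition n) (f : Fin m → ℕ)
    (hb : j.blocks = List.ofFn f) : j.length = m := by
  simp [Composition.length, hb]

open intervalIntegral in
theorem magnus_integral_abs_pow_sym (b : ℝ) (hb : 0 ≤ b) (i : ℕ) :
    ∫ x in (-b)..b, |x| ^ i = 2 * b ^ (i+1) / (i+1) := by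
  have hcont : ∀ u v : ℝ, IntervalIntegrable (fun x : ℝ => |x| ^ i) volume u v :=
    fun u v => ((continuous_abs.pow i)).intervalIntegrable u v
  have hsplit : ∫ x in (-b)..b, |x| ^ i =
      (∫ x in (-b)..(0:ℝ), |x| ^ i) + ∫ x in (0:ℝ)..b, |x| ^ i :=
    (integral_add_adjacent_intervals (hcont _ _) (hcont _ _)).symm
  have h1 : ∫ x in (0:ℝ)..b, |x| ^ i = b ^ (i+1) / (i+1) := by
    rw [integral_congr (g := fun x => x ^ i)
      (by intro x hx
          rw [Set.uIcc_of_le hb] at hx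
          show |x| ^ i = x ^ i
          rw [abs_of_nonneg hx.1])]
    rw [integral_pow]
    simp
  have h2 : ∫ x in (-b)..(0:ℝ), |x| ^ i = b ^ (i+1) / (i+1) := by
    rw [integral_congr (g := fun x => (-x) ^ i)
      (by intro x hx
          rw [Set.uIcc_of_le (by linarith : -b ≤ (0:ℝ))] at hx
          show |x| ^ i = (-x) ^ i
          rw [abs_of_nonpos hx.2])]
    rw [integral_comp_neg (fun x => x ^ i), neg_neg, neg_zero, integral_pow]
    simp
  rw [hsplit, h1, h2]; ring

open intervalIntegral in
theorem magnus_integral_c_abs_pow (t₀ h c : ℝ) (h0 : 0 ≤ h) (i : ℕ) :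
    ∫ x in Set.Icc t₀ (t₀ + h), c * |x - (t₀ + h/2)| ^ i =
      2 * c * (h/2) ^ (i+1) / (i+1) := by
  rw [integral_Icc_eq_integral_Ioc, ← integral_of_le (by linarith : t₀ ≤ t₀ + h)]
  rw [intervalIntegral.integral_const_mul]
  have := integral_comp_sub_right (a := t₀) (b := t₀ + h) (fun u => |u| ^ i) (t₀ + h/2)
  have e1 : t₀ - (t₀ + h/2) = -(h/2) := by ring
  have e2 : t₀ + h - (t₀ + h/2) = h/2 := by ring
  rw [e1, e2] at this
  rw [this, magnus_integral_abs_pow_sym (h/2) (by linarith) i]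
  ring

/-- The value of the summand at an image point of `magnusι`. -/
theorem magnusι_value (c h : ℝ) (hc : 0 ≤ c) (hh : 0 ≤ h) (z : ℕ) (f : Fin (z+1) → ℕ) :
    ENNReal.ofReal ((h/2) ^ ((magnusι ⟨z, f⟩).1 + 1) *
        (((2*c) ^ ((magnusι ⟨z, f⟩).2.length) / ((magnusι ⟨z, f⟩).2.length : ℝ)) *
          ∏ i, (1 / ((magnusι ⟨z, f⟩).2.blocksFun i : ℝ)))) =
      ENNReal.ofReal (1 / ((z:ℝ)+1)) *
        ∏ i : Fin (z+1), ENNReal.ofReal (2*c*(h/2) ^ (f i + 1) / ((f i : ℝ)+1)) := by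
  have hb := magnusι_blocks ⟨z, f⟩
  have hlen : (magnusι ⟨z, f⟩).2.length = z + 1 := magnus_comp_length _ _ hb
  have hfst := magnusι_fst ⟨z, f⟩
  have hprod : ∏ i, (1 / ((magnusι ⟨z, f⟩).2.blocksFun i : ℝ)) =
      ∏ i : Fin (z+1), (1 / ((f i : ℝ) + 1)) := by
    rw [magnus_comp_prod_blocksFun _ _ hb (fun m => 1 / (m : ℝ))]
    push_cast
    rfl
  rw [hprod, hlen, hfst]
  push_cast
  have h2c : (2 * c : ℝ) ^ (z + 1) = ∏ _i : Fin (z + 1), (2 * c) := by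
    rw [Finset.prod_const, Finset.card_univ, Fintype.card_fin]
  have hsplit : ∏ i : Fin (z+1), (2 * c * (h/2) ^ (f i + 1) / ((f i : ℝ) + 1)) =
      (2 * c) ^ (z + 1) * ((∏ i : Fin (z+1), (h/2) ^ (f i + 1)) *
        ∏ i : Fin (z+1), (1 / ((f i : ℝ) + 1))) := by
    rw [h2c, ← Finset.prod_mul_distrib, ← Finset.prod_mul_distrib]
    exact Finset.prod_congr rfl (fun i _ => by ring)
  have hpow : (h/2 : ℝ) ^ (∑ i, (f i + 1)) = ∏ i : Fin (z+1), (h/2) ^ (f i + 1) :=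
    (Finset.prod_pow_eq_pow_sum _ _ _).symm
  have hreal : (h/2 : ℝ) ^ (∑ i, (f i + 1)) *
      ((2*c) ^ (z+1) / ((z:ℝ) + 1) * ∏ i : Fin (z+1), (1 / ((f i : ℝ) + 1))) =
      (1 / ((z:ℝ)+1)) * ∏ i : Fin (z+1), (2*c*(h/2) ^ (f i + 1) / ((f i : ℝ)+1)) := by
    rw [hsplit, hpow]
    ring
  rw [hreal, ENNReal.ofReal_mul (by positivity), ENNReal.ofReal_prod_of_nonneg
    (fun i _ => by positivity)]

/-! ### Main theorem -/

/-- If `‖aᵢ‖ ≤ c`, `0 ≤ h < 2` and `A(τ) = Σᵢ aᵢ (τ − (t₀ + h/2))^i` on `[t₀, t₀+h]`, then,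
provided the right-hand side converges,
`Σ_{n≥1} ‖Ωₙ(t₀,h)‖ ≤ Σ_{k≥1} (h/2)^k Σ_{j ∈ C(k)} ((2c)^(dim j)/dim j) Π_i (1/jᵢ)`. -/
theorem magnus_series_norm_le {𝒜 : Type*} [NormedRing 𝒜] [NormedAlgebra ℝ 𝒜] [CompleteSpace 𝒜]
    (a : ℕ → 𝒜) (c : ℝ) (hc : ∀ i, ‖a i‖ ≤ c)
    (t₀ h : ℝ) (h0 : 0 ≤ h) (h2 : h < 2) (A : ℝ → 𝒜)
    (hA : ∀ τ ∈ Set.Icc t₀ (t₀ + h),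
      HasSum (fun i : ℕ => (τ - (t₀ + h / 2)) ^ i • a i) (A τ))
    (hconv : Summable fun k : ℕ => (h / 2) ^ (k + 1) *
      ∑ j : Composition (k + 1), ((2 * c) ^ j.length / (j.length : ℝ)) *
        ∏ i, (1 / (j.blocksFun i : ℝ))) :
    ∑' n : ℕ, ‖MagnusTerm A t₀ h (n + 1)‖ ≤
      ∑' k : ℕ, (h / 2) ^ (k + 1) *
        ∑ j : Composition (k + 1), ((2 * c) ^ j.length / (j.length : ℝ)) *
          ∏ i, (1 / (j.blocksFun i : ℝ)) := by
  have hc0 : 0 ≤ c := le_trans (norm_nonneg _) (hc 0)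
  have hh2 : (0:ℝ) ≤ h / 2 := by linarith
  have hh1 : h / 2 < 1 := by linarith
  set mid : ℝ := t₀ + h / 2 with hmid
  set S : Set ℝ := Set.Icc t₀ (t₀ + h) with hSdef
  have hSmeas : MeasurableSet S := measurableSet_Icc
  set w : ℕ → ℝ≥0∞ := fun m => ENNReal.ofReal (2*c*(h/2) ^ (m+1) / ((m:ℝ)+1)) with hw
  set s : ℝ≥0∞ := ∑' m, w m with hs
  set G : ℝ → ℝ≥0∞ := fun τ => ∑' i : ℕ, ENNReal.ofReal (c * |τ - mid| ^ i) with hG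
  have hGmeas : Measurable G := by
    apply Measurable.ennreal_tsum
    intro i
    exact ENNReal.measurable_ofReal.comp
      ((continuous_const.mul (((continuous_id.sub continuous_const).abs).pow i)).measurable)
  set g : ℝ → ℝ≥0∞ := fun τ => S.indicator G τ with hg
  have hgmeas : Measurable g := hGmeas.indicator hSmeas
  -- |τ - mid| ≤ h/2 on S
  have habs : ∀ τ ∈ S, |τ - mid| ≤ h / 2 := by
    intro τ hτ
    obtain ⟨ha', hb'⟩ := hτ
    rw [abs_le]
    constructor <;> simp only [hmid] <;> linarith
  -- ‖A τ‖ bounded by G on S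
  have hAG : ∀ τ ∈ S, ENNReal.ofReal ‖A τ‖ ≤ G τ := by
    intro τ hτ
    have hsummable : Summable (fun i : ℕ => ‖(τ - mid) ^ i • a i‖) := by
      apply Summable.of_nonneg_of_le (fun i => norm_nonneg _) (fun i => ?_)
        ((summable_geometric_of_lt_one hh2 hh1).mul_left c)
      rw [norm_smul, norm_pow, Real.norm_eq_abs]
      calc |τ - mid| ^ i * ‖a i‖ ≤ (h/2) ^ i * c :=
            mul_le_mul (pow_le_pow_left₀ (abs_nonneg _) (habs τ hτ) i) (hc i) (norm_nonneg _)
              (by positivity)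
        _ = c * (h/2) ^ i := by ring
    have hAeq : ‖A τ‖ ≤ ∑' i, ‖(τ - mid) ^ i • a i‖ := by
      rw [← (hA τ hτ).tsum_eq]
      exact norm_tsum_le_tsum_norm hsummable
    calc ENNReal.ofReal ‖A τ‖ ≤ ENNReal.ofReal (∑' i, ‖(τ - mid) ^ i • a i‖) :=
          ENNReal.ofReal_le_ofReal hAeq
      _ = ∑' i, ENNReal.ofReal ‖(τ - mid) ^ i • a i‖ :=
          ENNReal.ofReal_tsum_of_nonneg (fun i => norm_nonneg _) hsummable
      _ ≤ G τ := by
          apply ENNReal.tsum_le_tsum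
          intro i
          apply ENNReal.ofReal_le_ofReal
          rw [norm_smul, norm_pow, Real.norm_eq_abs]
          calc |τ - mid| ^ i * ‖a i‖ ≤ |τ - mid| ^ i * c :=
                mul_le_mul_of_nonneg_left (hc i) (by positivity)
            _ = c * |τ - mid| ^ i := by ring
  -- the integral of g is s
  have hgint : ∫⁻ y, g y = s := by
    have hinner : ∀ i : ℕ, ∫⁻ y in S, ENNReal.ofReal (c * |y - mid| ^ i) = w i := by
      intro i
      have hcont : Continuous fun y : ℝ => c * |y - mid| ^ i :=
        continuous_const.mul (((continuous_id.sub continuous_const).abs).pow i)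
      have hint : IntegrableOn (fun y : ℝ => c * |y - mid| ^ i) S := by
        rw [hSdef]; exact hcont.integrableOn_Icc
      have := ofReal_integral_eq_lintegral_ofReal hint
        (Filter.Eventually.of_forall fun y => by positivity)
      rw [← this]
      rw [hSdef, hmid, magnus_integral_c_abs_pow t₀ h c h0 i]
    calc ∫⁻ y, g y = ∫⁻ y in S, G y := lintegral_indicator hSmeas G
      _ = ∑' i : ℕ, ∫⁻ y in S, ENNReal.ofReal (c * |y - mid| ^ i) := by
          rw [hG]
          exact lintegral_tsum fun i => (ENNReal.measurable_ofReal.comp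
            ((continuous_const.mul (((continuous_id.sub
              continuous_const).abs).pow i)).measurable)).aemeasurable
      _ = ∑' i, w i := by
          congr 1
          funext i
          exact hinner i
      _ = s := hs.symm
  -- Step 1: termwise bound
  have step1 : ∀ n : ℕ, (‖MagnusTerm A t₀ h (n+1)‖₊ : ℝ≥0∞) ≤
      ENNReal.ofReal (1/((n:ℝ)+1)) * s ^ (n+1) := by
    intro n
    have hcube : MeasurableSet (Set.univ.pi fun _ : Fin (n+1) => S) :=
      MeasurableSet.univ_pi fun _ => hSmeas
    have key : ∀ t : Fin (n+1) → ℝ,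
        (Set.univ.pi fun _ : Fin (n+1) => S).indicator
          (fun t => ((‖MPKernel (n+1) t •
            ((List.ofFn fun i : Fin (n+1) => A (t i)).reverse).prod‖₊ : ℝ≥0) : ℝ≥0∞)) t
        ≤ ENNReal.ofReal (1/((n:ℝ)+1)) * ∏ i, g (t i) := by
      intro t
      by_cases ht : t ∈ Set.univ.pi fun _ : Fin (n+1) => S
      · rw [Set.indicator_of_mem ht]
        have htS : ∀ i, t i ∈ S := fun i => ht i (Set.mem_univ i)
        have hprodnorm : ‖((List.ofFn fun i : Fin (n+1) => A (t i)).reverse).prod‖ ≤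
            ∏ i, ‖A (t i)‖ := by
          have hne : (List.ofFn fun i : Fin (n+1) => A (t i)).reverse ≠ [] := by
            intro hcon
            have := congrArg List.length hcon
            simp at this
          calc ‖((List.ofFn fun i : Fin (n+1) => A (t i)).reverse).prod‖
              ≤ (((List.ofFn fun i : Fin (n+1) => A (t i)).reverse).map norm).prod :=
                List.norm_prod_le' hne
            _ = (((List.ofFn fun i : Fin (n+1) => A (t i)).map norm).reverse).prod := by
                rw [List.map_reverse]
            _ = (((List.ofFn fun i : Fin (n+1) => A (t i)).map norm)).prod :=
                List.prod_reverse _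
            _ = (List.ofFn fun i : Fin (n+1) => ‖A (t i)‖).prod := by
                rw [List.map_ofFn]; rfl
            _ = ∏ i, ‖A (t i)‖ := List.prod_ofFn
        calc ((‖MPKernel (n+1) t •
              ((List.ofFn fun i : Fin (n+1) => A (t i)).reverse).prod‖₊ : ℝ≥0) : ℝ≥0∞)
            = ENNReal.ofReal ‖MPKernel (n+1) t •
              ((List.ofFn fun i : Fin (n+1) => A (t i)).reverse).prod‖ :=
              (ofReal_norm _).symm
          _ ≤ ENNReal.ofReal ((1/((n:ℝ)+1)) * ∏ i, ‖A (t i)‖) := by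
              apply ENNReal.ofReal_le_ofReal
              rw [norm_smul, Real.norm_eq_abs]
              exact mul_le_mul (by exact_mod_cast mpkernel_abs_le n t) hprodnorm
                (norm_nonneg _) (by positivity)
          _ = ENNReal.ofReal (1/((n:ℝ)+1)) * ∏ i, ENNReal.ofReal ‖A (t i)‖ := by
              rw [ENNReal.ofReal_mul (by positivity),
                ENNReal.ofReal_prod_of_nonneg (fun i _ => norm_nonneg _)]
          _ ≤ ENNReal.ofReal (1/((n:ℝ)+1)) * ∏ i, g (t i) := by
              apply mul_le_mul_right
              apply Finset.prod_le_prod' 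
              intro i _
              rw [hg]
              simp only
              rw [Set.indicator_of_mem (htS i)]
              exact hAG _ (htS i)
      · rw [Set.indicator_of_notMem ht]
        exact zero_le
    calc (‖MagnusTerm A t₀ h (n+1)‖₊ : ℝ≥0∞)
        ≤ ∫⁻ t in Set.univ.pi fun _ : Fin (n+1) => S, (‖MPKernel (n+1) t •
            ((List.ofFn fun i : Fin (n+1) => A (t i)).reverse).prod‖₊ : ℝ≥0∞) ∂volume :=
          enorm_integral_le_lintegral_enorm _
      _ = ∫⁻ t, (Set.univ.pi fun _ : Fin (n+1) => S).indicator
            (fun t => ((‖MPKernel (n+1) t •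
              ((List.ofFn fun i : Fin (n+1) => A (t i)).reverse).prod‖₊ : ℝ≥0) : ℝ≥0∞)) t :=
          (lintegral_indicator hcube _).symm
      _ ≤ ∫⁻ t, ENNReal.ofReal (1/((n:ℝ)+1)) * ∏ i, g (t i) := lintegral_mono key
      _ = ENNReal.ofReal (1/((n:ℝ)+1)) * ∫⁻ t : Fin (n+1) → ℝ, ∏ i, g (t i) :=
          lintegral_const_mul' _ _ ENNReal.ofReal_ne_top
      _ = ENNReal.ofReal (1/((n:ℝ)+1)) * s ^ (n+1) := by
          rw [volume_pi, magnus_lintegral_pi_pow volume g hgmeas, hgint]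
  -- the composition-indexed majorant
  set F : (Σ k : ℕ, Composition (k+1)) → ℝ≥0∞ := fun q =>
    ENNReal.ofReal ((h/2) ^ (q.1+1) * (((2*c) ^ (q.2.length) / (q.2.length : ℝ)) *
      ∏ i, (1 / (q.2.blocksFun i : ℝ)))) with hF
  have hterm_nonneg : ∀ (k : ℕ) (j : Composition (k+1)),
      0 ≤ (2*c) ^ j.length / (j.length : ℝ) * ∏ i, (1/(j.blocksFun i : ℝ)) := fun k j =>
    mul_nonneg (div_nonneg (pow_nonneg (by linarith) _) (Nat.cast_nonneg _))
      (Finset.prod_nonneg fun i _ => by positivity)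
  set R : ℝ≥0∞ := ∑' q : Σ k : ℕ, Composition (k+1), F q with hR
  have hRofReal : R = ENNReal.ofReal (∑' k : ℕ, (h/2) ^ (k+1) *
      ∑ j : Composition (k+1), ((2*c) ^ j.length / (j.length : ℝ)) *
        ∏ i, (1 / (j.blocksFun i : ℝ))) := by
    rw [ENNReal.ofReal_tsum_of_nonneg (fun k => mul_nonneg (pow_nonneg hh2 _)
      (Finset.sum_nonneg fun j _ => hterm_nonneg k j)) hconv]
    rw [hR, ENNReal.tsum_sigma' F]
    congr 1
    funext k
    rw [tsum_fintype, Finset.mul_sum, ENNReal.ofReal_sum_of_nonneg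
      (fun j _ => mul_nonneg (pow_nonneg hh2 _) (hterm_nonneg k j))]
  -- Step 3: sum the bounds
  have hmain : ∑' n : ℕ, (‖MagnusTerm A t₀ h (n+1)‖₊ : ℝ≥0∞) ≤ R := by
    calc ∑' n : ℕ, (‖MagnusTerm A t₀ h (n+1)‖₊ : ℝ≥0∞)
        ≤ ∑' n : ℕ, ENNReal.ofReal (1/((n:ℝ)+1)) * s ^ (n+1) := ENNReal.tsum_le_tsum step1
      _ = ∑' z : ℕ, ∑' f : Fin (z+1) → ℕ,
            ENNReal.ofReal (1/((z:ℝ)+1)) * ∏ i, w (f i) := by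
          congr 1
          funext z
          rw [magnus_ennreal_tsum_pow w (z+1), ENNReal.tsum_mul_left]
      _ = ∑' p : Σ z : ℕ, (Fin (z+1) → ℕ),
            ENNReal.ofReal (1/((p.1:ℝ)+1)) * ∏ i, w (p.2 i) :=
          (ENNReal.tsum_sigma' (fun p : Σ z : ℕ, (Fin (z+1) → ℕ) =>
            ENNReal.ofReal (1/((p.1:ℝ)+1)) * ∏ i, w (p.2 i))).symm
      _ = ∑' p : Σ z : ℕ, (Fin (z+1) → ℕ), F (magnusι p) := by
          congr 1
          funext ⟨z, f⟩
          exact (magnusι_value c h hc0 h0 z f).symm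
      _ ≤ R := ENNReal.tsum_comp_le_tsum_of_injective magnusι_injective F
  -- conclude
  have hRne : R ≠ ⊤ := by rw [hRofReal]; exact ENNReal.ofReal_ne_top
  have hsummable : Summable fun n : ℕ => ‖MagnusTerm A t₀ h (n+1)‖₊ := by
    rw [← ENNReal.tsum_coe_ne_top_iff_summable]
    exact ne_top_of_le_ne_top hRne hmain
  have hLHS : ∑' n : ℕ, ‖MagnusTerm A t₀ h (n+1)‖ =
      (∑' n : ℕ, (‖MagnusTerm A t₀ h (n+1)‖₊ : ℝ≥0∞)).toReal := by
    rw [← ENNReal.coe_tsum hsummable, ENNReal.coe_toReal, NNReal.coe_tsum]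
    rfl
  rw [hLHS]
  refine le_trans (ENNReal.toReal_mono hRne hmain) ?_
  rw [hRofReal, ENNReal.toReal_ofReal (tsum_nonneg (fun k => mul_nonneg (pow_nonneg hh2 _)
    (Finset.sum_nonneg fun j _ => hterm_nonneg k j)))]
end

section
/- Let b_1, b_2, b_3, … be nonnegative real numbers and let x ≥ 0 be such that Σ_{k=1}^∞ b_k x^k < ∞. Then exp(Σ_{k=1}^∞ b_k x^k) = Σ_{p=0}^∞ x^p Σ_{k ∈ C(p)} (1/(dim k)!) Π_{l=1}^{dim k} b_{k_l}, where for p = 0 the inner sum equals 1 (the contribution of the empty composition), and in particular the right-hand side converges. -/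
/-!
All terms are nonnegative, so the double series can be summed in `ℝ≥0∞`, where it may be
regrouped freely. Lowering every block by one identifies compositions of all integers with
finite tuples of naturals; since `x ^ p = ∏ l, x ^ k_l`, grouping the tuples by their length `n`
turns the sum into `∑ n, (n !)⁻¹ * (∑ k, b (k + 1) * x ^ (k + 1)) ^ n`, the exponential series.
-/

open scoped Nat ENNReal

namespace Composition

def sigmaEquivSigmaFinTuple : (Σ p, Composition p) ≃ (Σ n, Fin n → ℕ) where
  toFun c := ⟨c.2.length, fun i => c.2.blocksFun i - 1⟩
  invFun f := ⟨∑ i, (f.2 i + 1),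
    ⟨List.ofFn fun i => f.2 i + 1, by simp [List.mem_ofFn], by rw [List.sum_ofFn]⟩⟩
  left_inv := fun ⟨p, c⟩ => by
    refine sigma_eq_iff_blocks_eq.2 ?_
    conv_rhs => rw [← c.ofFn_blocksFun]
    exact congrArg List.ofFn (funext fun i => Nat.sub_add_cancel (c.one_le_blocksFun i))
  right_inv := fun ⟨n, f⟩ => by
    refine Fin.sigma_eq_of_eq_comp_cast (by simp [Composition.length]) (funext fun i => ?_)
    simp [Composition.blocksFun]; rfl

lemma prod_mul_pow_blocksFun {M : Type*} [CommMonoid M] {n : ℕ} (c : Composition n)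
    (f : ℕ → M) (x : M) :
    ∏ l, f (c.blocksFun l) * x ^ c.blocksFun l = (∏ l, f (c.blocksFun l)) * x ^ n := by
  rw [Finset.prod_mul_distrib, Finset.prod_pow_eq_pow_sum, c.sum_blocksFun]

end Composition

namespace ENNReal

theorem tsum_pi_fin_prod_eq_prod_tsum {α : Type*} (n : ℕ) (C : Fin n → α → ℝ≥0∞) :
    ∑' f : Fin n → α, ∏ i, C i (f i) = ∏ i, ∑' a, C i a := by
  induction n with
  | zero => simp
  | succ n ih =>
    rw [← (Fin.consEquiv fun _ : Fin (n + 1) => α).tsum_eq, Fin.prod_univ_succ]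
    simp only [Fin.consEquiv_apply, Fin.prod_univ_succ, Fin.cons_zero, Fin.cons_succ]
    rw [ENNReal.tsum_prod']
    simp_rw [ENNReal.tsum_mul_left, ih, ENNReal.tsum_mul_right]

theorem tsum_inv_factorial_mul_ofReal_pow {S : ℝ} (hS : 0 ≤ S) :
    ∑' n : ℕ, (n ! : ℝ≥0∞)⁻¹ * ENNReal.ofReal S ^ n = ENNReal.ofReal (Real.exp S) := by
  have hexp : HasSum (fun n => S ^ n / n !) (Real.exp S) := by
    rw [Real.exp_eq_exp_ℝ]
    exact NormedSpace.expSeries_div_hasSum_exp S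
  have hterm (n : ℕ) : (n ! : ℝ≥0∞)⁻¹ * ENNReal.ofReal S ^ n = ENNReal.ofReal (S ^ n / n !) := by
    rw [div_eq_inv_mul, ENNReal.ofReal_mul (by positivity), ENNReal.ofReal_pow hS,
      ENNReal.ofReal_inv_of_pos (by positivity), ENNReal.ofReal_natCast]
  simp_rw [hterm]
  rw [← ENNReal.ofReal_tsum_of_nonneg (fun n => by positivity) hexp.summable, hexp.tsum_eq]

end ENNReal

theorem hasSum_of_tsum_ofReal_eq {α : Type*} {f : α → ℝ} (hf : ∀ a, 0 ≤ f a) {r : ℝ}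
    (hr : 0 ≤ r) (h : ∑' a, ENNReal.ofReal (f a) = ENNReal.ofReal r) : HasSum f r := by
  have hsum := ENNReal.hasSum_toReal (h ▸ ENNReal.ofReal_ne_top)
  rw [← ENNReal.tsum_toReal_eq fun _ => ENNReal.ofReal_ne_top, h, ENNReal.toReal_ofReal hr] at hsum
  simpa only [ENNReal.toReal_ofReal (hf _)] using hsum

namespace Composition

theorem tsum_sigma_inv_factorial_mul_prod (a : ℕ → ℝ≥0∞) :
    ∑' c : Σ p, Composition p, (c.2.length ! : ℝ≥0∞)⁻¹ * ∏ l, a (c.2.blocksFun l) =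
      ∑' n : ℕ, (n ! : ℝ≥0∞)⁻¹ * (∑' k, a (k + 1)) ^ n := by
  let F : (Σ n, Fin n → ℕ) → ℝ≥0∞ := fun f => (f.1 ! : ℝ≥0∞)⁻¹ * ∏ i, a (f.2 i + 1)
  have hF (c : Σ p, Composition p) :
      (c.2.length ! : ℝ≥0∞)⁻¹ * ∏ l, a (c.2.blocksFun l) = F (sigmaEquivSigmaFinTuple c) := by
    simp only [F, sigmaEquivSigmaFinTuple, Equiv.coe_fn_mk,
      Nat.sub_add_cancel (c.2.one_le_blocksFun _)]
  simp_rw [hF]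
  rw [sigmaEquivSigmaFinTuple.tsum_eq F, ENNReal.tsum_sigma']
  simp only [F, ENNReal.tsum_mul_left, ENNReal.tsum_pi_fin_prod_eq_prod_tsum _ fun _ k => a (k + 1),
    Fin.prod_const]

end Composition

/-- **Regrouping-by-powers identity.** If `b₁, b₂, …` are nonnegative reals, `x ≥ 0`, and
`Σ_{k≥1} b_k x^k` converges, then
`exp(Σ_{k≥1} b_k x^k) = Σ_p x^p Σ_{k ∈ C(p)} (1/(dim k)!) Π_l b_{k_l}`,
where the inner sum at `p = 0` equals `1` (the empty composition); in particular the
right-hand side converges (this is the content of `HasSum`). -/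
theorem exp_tsum_eq_sum_compositions (b : ℕ → ℝ) (hb : ∀ k, 1 ≤ k → 0 ≤ b k)
    (x : ℝ) (hx : 0 ≤ x)
    (hconv : Summable fun k : ℕ => b (k + 1) * x ^ (k + 1)) :
    HasSum
      (fun p : ℕ => x ^ p *
        ∑ k : Composition p, ((k.length ! : ℝ))⁻¹ * ∏ l, b (k.blocksFun l))
      (Real.exp (∑' k : ℕ, b (k + 1) * x ^ (k + 1))) := by
  have hterm (k : ℕ) (hk : 1 ≤ k) : 0 ≤ b k * x ^ k := mul_nonneg (hb k hk) (pow_nonneg hx k)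
  set S := ∑' k : ℕ, b (k + 1) * x ^ (k + 1)
  have hS : 0 ≤ S := tsum_nonneg fun k => hterm _ k.succ_pos
  let g : (Σ p, Composition p) → ℝ := fun c =>
    x ^ c.1 * ((c.2.length ! : ℝ)⁻¹ * ∏ l, b (c.2.blocksFun l))
  have hg (c : Σ p, Composition p) : ENNReal.ofReal (g c) = (c.2.length ! : ℝ≥0∞)⁻¹ *
      ∏ l, ENNReal.ofReal (b (c.2.blocksFun l) * x ^ c.2.blocksFun l) := by
    rw [← ENNReal.ofReal_prod_of_nonneg fun l _ => hterm _ (c.2.one_le_blocksFun l),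
      Composition.prod_mul_pow_blocksFun, ← ENNReal.ofReal_natCast, ← ENNReal.ofReal_inv_of_pos
      (by positivity), ← ENNReal.ofReal_mul (by positivity)]
    exact congrArg _ (by ring)
  have hsum : HasSum g (Real.exp S) := by
    refine hasSum_of_tsum_ofReal_eq (fun c => ?_) (Real.exp_pos S).le ?_
    · exact mul_nonneg (pow_nonneg hx _) (mul_nonneg (by positivity)
        (Finset.prod_nonneg fun l _ => hb _ (c.2.one_le_blocksFun l)))
    · rw [tsum_congr hg,
        Composition.tsum_sigma_inv_factorial_mul_prod fun k => ENNReal.ofReal (b k * x ^ k),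
        ← ENNReal.ofReal_tsum_of_nonneg (fun k => hterm _ k.succ_pos) hconv,
        ENNReal.tsum_inv_factorial_mul_ofReal_pow hS]
  refine hsum.sigma fun p => ?_
  simpa only [Finset.mul_sum] using hasSum_fintype _
end

section
/- (Proposition 2 of the paper, formal power series form.) Let A be a normed ℚ-algebra with submultiplicative norm, let m ≥ 1, and let F_1, …, F_m be formal power series over A with zero constant coefficients such that ‖coeff_j F_i‖ ≤ c̄ for all i = 1,…,m and all j ≥ 1. Then for every p ≥ 1, ‖coeff_p( exp(F_1) · exp(F_2) ⋯ exp(F_m) )‖ ≤ Σ_{w ∈ C(p)} Σ_{(k_1,…,k_m) ∈ ℕ^m : k_1+⋯+k_m = dim w} (c̄^{k_1} ⋯ c̄^{k_m}) / (k_1! ⋯ k_m!), where exp(F) := Σ_{z=0}^∞ F^z / z! (well defined coefficientwise). -/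
open scoped Nat

/-- The exponential `exp(F) := Σ_{z=0}^∞ F^z / z!` of a formal power series with zero constant
coefficient, defined coefficientwise (the coefficient of `X^p` in `F^z` vanishes for `z > p`). -/
noncomputable def PowerSeries.expOf {A : Type*} [NormedRing A] [NormedAlgebra ℝ A]
    (F : PowerSeries A) : PowerSeries A :=
  PowerSeries.mk fun p => ∑ z ∈ Finset.range (p + 1),
    ((z ! : ℝ))⁻¹ • PowerSeries.coeff (R := A) p (F ^ z)

open PowerSeries Finset

section Aux

/-- If the constant coefficient vanishes, low coefficients of powers vanish. -/
lemma aux_coeff_pow_eq_zero {R : Type*} [Semiring R] {f : PowerSeries R}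
    (hf : constantCoeff (R := R) f = 0) : ∀ {z a : ℕ}, a < z → coeff (R := R) a (f ^ z) = 0 := by
  intro z
  induction z with
  | zero => intro a ha; omega
  | succ z ih =>
    intro a ha
    rw [pow_succ, coeff_mul]
    apply Finset.sum_eq_zero
    rintro ⟨i, j⟩ hij
    rw [Finset.HasAntidiagonal.mem_antidiagonal] at hij
    by_cases hi : i < z
    · rw [ih hi, zero_mul]
    · have hj : j = 0 := by omega
      subst hj
      rw [coeff_zero_eq_constantCoeff, hf, mul_zero]

variable {A : Type*} [NormedRing A] [NormOneClass A]

lemma aux_norm_coeff_one_le (n : ℕ) :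
    ‖coeff (R := A) n (1 : PowerSeries A)‖ ≤ coeff (R := ℝ) n (1 : PowerSeries ℝ) := by
  rw [coeff_one, coeff_one]
  split
  · simp
  · simp

lemma aux_norm_coeff_mul_le {P P' : PowerSeries A} {Q Q' : PowerSeries ℝ}
    (h : ∀ j, ‖coeff (R := A) j P‖ ≤ coeff (R := ℝ) j Q) (h' : ∀ j, ‖coeff (R := A) j P'‖ ≤ coeff (R := ℝ) j Q')
    (n : ℕ) : ‖coeff (R := A) n (P * P')‖ ≤ coeff (R := ℝ) n (Q * Q') := by
  rw [coeff_mul, coeff_mul]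
  refine (norm_sum_le _ _).trans (Finset.sum_le_sum ?_)
  rintro ⟨i, j⟩ _
  refine (norm_mul_le _ _).trans ?_
  exact mul_le_mul (h i) (h' j) (norm_nonneg _) ((norm_nonneg _).trans (h i))

lemma aux_norm_coeff_pow_le {P : PowerSeries A} {Q : PowerSeries ℝ}
    (h : ∀ j, ‖coeff (R := A) j P‖ ≤ coeff (R := ℝ) j Q) (z : ℕ) :
    ∀ n, ‖coeff (R := A) n (P ^ z)‖ ≤ coeff (R := ℝ) n (Q ^ z) := by
  induction z with
  | zero => simpa using aux_norm_coeff_one_le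
  | succ z ih =>
    intro n
    rw [pow_succ, pow_succ]
    exact aux_norm_coeff_mul_le ih h n

variable [NormedAlgebra ℝ A]

lemma aux_norm_coeff_expOf_le {P : PowerSeries A} {Q : PowerSeries ℝ}
    (h : ∀ j, ‖coeff (R := A) j P‖ ≤ coeff (R := ℝ) j Q) (n : ℕ) :
    ‖coeff (R := A) n (expOf P)‖ ≤ coeff (R := ℝ) n (expOf Q) := by
  rw [expOf, expOf, coeff_mk, coeff_mk]
  refine (norm_sum_le _ _).trans (Finset.sum_le_sum ?_)
  intro z _
  rw [norm_smul, norm_inv, Real.norm_natCast]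
  rw [smul_eq_mul]
  apply mul_le_mul_of_nonneg_left (aux_norm_coeff_pow_le h z n)
  positivity

lemma aux_norm_coeff_list_prod_le :
    ∀ (m : ℕ) (f : Fin m → PowerSeries A) (g : Fin m → PowerSeries ℝ),
    (∀ i j, ‖coeff (R := A) j (f i)‖ ≤ coeff (R := ℝ) j (g i)) →
    ∀ n, ‖coeff (R := A) n (List.ofFn f).prod‖ ≤ coeff (R := ℝ) n (List.ofFn g).prod := by
  intro m
  induction m with
  | zero => intro f g h n; simpa using aux_norm_coeff_one_le n
  | succ m ih =>
    intro f g h n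
    rw [List.ofFn_succ, List.ofFn_succ, List.prod_cons, List.prod_cons]
    exact aux_norm_coeff_mul_le (h 0) (ih _ _ fun i j => h i.succ j) n

end Aux

section Real

lemma aux_expOf_mul_expOf {P Q : PowerSeries ℝ}
    (hP : constantCoeff (R := ℝ) P = 0) (hQ : constantCoeff (R := ℝ) Q = 0) :
    expOf P * expOf Q = expOf (P + Q) := by
  ext p
  -- vanishing of high terms
  have hvan : ∀ y z : ℕ, p < y + z → coeff (R := ℝ) p (P ^ y * Q ^ z) = 0 := by
    intro y z hyz
    rw [coeff_mul]
    apply Finset.sum_eq_zero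
    rintro ⟨a, b⟩ hab
    rw [Finset.HasAntidiagonal.mem_antidiagonal] at hab
    by_cases ha : a < y
    · rw [aux_coeff_pow_eq_zero hP ha, zero_mul]
    · have hb : b < z := by omega
      rw [aux_coeff_pow_eq_zero hQ hb, mul_zero]
  have key : ∀ (R : PowerSeries ℝ), constantCoeff (R := ℝ) R = 0 → ∀ a : ℕ, a ≤ p →
      coeff (R := ℝ) a (expOf R) = ∑ y ∈ range (p + 1), ((y)! : ℝ)⁻¹ * coeff (R := ℝ) a (R ^ y) := by
    intro R hR a hap
    rw [expOf, coeff_mk]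
    simp only [smul_eq_mul]
    apply Finset.sum_subset
    · exact Finset.range_subset_range.2 (by omega)
    · intro y _ hy
      rw [Finset.mem_range, not_lt] at hy
      rw [aux_coeff_pow_eq_zero hR (by omega), mul_zero]
  rw [coeff_mul]
  have lhs_eq : ∑ x ∈ Finset.HasAntidiagonal.antidiagonal p, coeff (R := ℝ) x.1 (expOf P) * coeff (R := ℝ) x.2 (expOf Q)
      = ∑ x ∈ (range (p+1)) ×ˢ (range (p+1)),
          (x.1 ! : ℝ)⁻¹ * (x.2 ! : ℝ)⁻¹ * coeff (R := ℝ) p (P ^ x.1 * Q ^ x.2) := by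
    have : ∀ x ∈ Finset.HasAntidiagonal.antidiagonal p,
        coeff (R := ℝ) x.1 (expOf P) * coeff (R := ℝ) x.2 (expOf Q)
        = ∑ y ∈ range (p+1), ∑ z ∈ range (p+1),
            (y ! : ℝ)⁻¹ * (z ! : ℝ)⁻¹ * (coeff (R := ℝ) x.1 (P ^ y) * coeff (R := ℝ) x.2 (Q ^ z)) := by
      rintro ⟨a, b⟩ hab
      rw [Finset.HasAntidiagonal.mem_antidiagonal] at hab
      rw [key P hP a (by omega), key Q hQ b (by omega), Finset.sum_mul_sum]
      apply Finset.sum_congr rfl; intro y _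
      apply Finset.sum_congr rfl; intro z _
      ring
    rw [Finset.sum_congr rfl this, Finset.sum_product, Finset.sum_comm]
    apply Finset.sum_congr rfl; intro y _
    rw [Finset.sum_comm]
    apply Finset.sum_congr rfl; intro z _
    rw [coeff_mul, Finset.mul_sum]
  rw [lhs_eq]
  -- right-hand side
  have coeff_inv : ∀ n y : ℕ, y ≤ n → ((n)! : ℝ)⁻¹ * (n.choose y : ℝ) = ((y)! : ℝ)⁻¹ * (((n-y))! : ℝ)⁻¹ := by
    intro n y hy
    have h := Nat.choose_mul_factorial_mul_factorial hy
    have hcast : (n.choose y : ℝ) * (y)! * ((n-y))! = (n)! := by exact_mod_cast congrArg (Nat.cast (R := ℝ)) h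
    have h1 : ((y)! : ℝ) ≠ 0 := by positivity
    have h2 : (((n-y))! : ℝ) ≠ 0 := by positivity
    have h3 : ((n)! : ℝ) ≠ 0 := by positivity
    field_simp
    linear_combination hcast
  have rhs_eq : coeff (R := ℝ) p (expOf (P + Q))
      = ∑ n ∈ range (p+1), ∑ x ∈ ((range (p+1)) ×ˢ (range (p+1))).filter (fun x => x.1 + x.2 = n),
          (x.1 ! : ℝ)⁻¹ * (x.2 ! : ℝ)⁻¹ * coeff (R := ℝ) p (P ^ x.1 * Q ^ x.2) := by
    rw [key (P + Q) (by rw [map_add, hP, hQ, add_zero]) p le_rfl]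
    apply Finset.sum_congr rfl
    intro n hn
    rw [Finset.mem_range] at hn
    have had : Finset.HasAntidiagonal.antidiagonal n
        = ((range (p+1)) ×ˢ (range (p+1))).filter (fun x => x.1 + x.2 = n) := by
      ext x
      simp only [Finset.HasAntidiagonal.mem_antidiagonal, Finset.mem_filter, Finset.mem_product, Finset.mem_range]
      omega
    rw [← had, Finset.Nat.sum_antidiagonal_eq_sum_range_succ_mk, add_pow, map_sum, Finset.mul_sum]
    apply Finset.sum_congr rfl
    intro y hy
    rw [Finset.mem_range] at hy
    have hc : ((n.choose y : ℕ) : PowerSeries ℝ) = PowerSeries.C (R := ℝ) ((n.choose y : ℕ) : ℝ) := by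
      rw [← map_natCast (PowerSeries.C (R := ℝ))]
    rw [hc, coeff_mul_C]
    have hciv := coeff_inv n y (by omega)
    linear_combination coeff (R := ℝ) p (P ^ y * Q ^ (n - y)) * hciv
  rw [rhs_eq, Finset.sum_fiberwise_eq_sum_filter]
  rw [← Finset.sum_filter_add_sum_filter_not ((range (p+1)) ×ˢ (range (p+1)))
    (fun x => x.1 + x.2 ∈ range (p+1))]
  have hz : ∑ x ∈ ((range (p+1)) ×ˢ (range (p+1))).filter
      (fun x => ¬ (x.1 + x.2 ∈ range (p+1))),
      (x.1 ! : ℝ)⁻¹ * (x.2 ! : ℝ)⁻¹ * coeff (R := ℝ) p (P ^ x.1 * Q ^ x.2) = 0 := by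
    apply Finset.sum_eq_zero
    intro x hx
    rw [Finset.mem_filter, Finset.mem_range] at hx
    rw [hvan x.1 x.2 (by omega), mul_zero]
  rw [hz, add_zero]

lemma aux_expOf_zero : expOf (0 : PowerSeries ℝ) = 1 := by
  ext p
  rw [expOf, coeff_mk]
  rw [Finset.sum_eq_single 0]
  · simp
  · intro z _ h0; rw [zero_pow h0, map_zero, smul_zero]
  · intro h; exact absurd (Finset.mem_range.2 (Nat.succ_pos p)) h

lemma aux_expOf_pow {G : PowerSeries ℝ} (hG : constantCoeff (R := ℝ) G = 0) (m : ℕ) :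
    (expOf G) ^ m = expOf ((m : ℝ) • G) := by
  induction m with
  | zero => simp [aux_expOf_zero]
  | succ m ih =>
    have hsm : constantCoeff (R := ℝ) ((m : ℝ) • G) = 0 := by
      rw [PowerSeries.constantCoeff_smul, hG, smul_zero]
    rw [pow_succ, ih, aux_expOf_mul_expOf hsm hG]
    congr 1
    push_cast
    rw [add_smul, one_smul]

end Real

section Comb

lemma aux_sum_range_getD (l : List ℕ) : ∑ i ∈ range l.length, l.getD i 0 = l.sum := by
  rw [← Fin.sum_univ_eq_sum_range (fun i => l.getD i 0) l.length]
  conv_rhs => rw [← List.ofFn_get l]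
  rw [List.sum_ofFn]
  apply Finset.sum_congr rfl
  intro i _
  simp [List.getD_eq_getElem _ _ i.isLt]

lemma aux_card_comp (p z : ℕ) :
    ((Finset.univ : Finset (Composition p)).filter (fun w => w.length = z)).card
      = ((Finset.finsuppAntidiag (range z) p).filter (fun l => ∀ i ∈ range z, l i ≠ 0)).card := by
  classical
  have hlen : ∀ w ∈ (Finset.univ : Finset (Composition p)).filter (fun w => w.length = z),
      w.blocks.length = z := by
    intro w hw; rw [Finset.mem_filter] at hw; exact (w.blocks_length).trans hw.2
  refine Finset.card_bij'
    (fun w hw => Finsupp.onFinset (range z) (fun n => w.blocks.getD n 0)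
      (fun n hn => Finset.mem_range.2 (by
        by_contra hnz
        exact hn (List.getD_eq_default _ _ (by rw [hlen w hw]; omega)))))
    (fun l hl => ⟨List.ofFn (fun i : Fin z => l i), ?_, ?_⟩)
    ?_ ?_ ?_ ?_
  · -- blocks positive
    intro x hx
    rw [List.mem_ofFn] at hx
    obtain ⟨i, rfl⟩ := hx
    exact Nat.pos_of_ne_zero ((Finset.mem_filter.1 hl).2 i (Finset.mem_range.2 i.isLt))
  · -- blocks sum
    rw [List.sum_ofFn, Fin.sum_univ_eq_sum_range]
    exact (Finset.mem_finsuppAntidiag.1 (Finset.mem_filter.1 hl).1).1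
  · -- i maps into target
    intro w hw
    rw [Finset.mem_filter]
    constructor
    · rw [Finset.mem_finsuppAntidiag]
      refine ⟨?_, Finsupp.support_onFinset_subset⟩
      show ∑ i ∈ range z, w.blocks.getD i 0 = p
      rw [← hlen w hw, aux_sum_range_getD]
      exact w.blocks_sum
    · intro i hi0
      simp only [Finsupp.onFinset_apply]
      have hiz : i < w.blocks.length := by rw [hlen w hw]; exact Finset.mem_range.1 hi0
      rw [List.getD_eq_getElem _ _ hiz]
      exact (w.blocks_pos (List.getElem_mem hiz)).ne'
  · -- j maps into source
    intro l hl
    rw [Finset.mem_filter]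
    refine ⟨Finset.mem_univ _, ?_⟩
    simp [Composition.length]
  · -- left inverse
    intro w hw
    apply Composition.ext
    simp only
    apply List.ext_getElem
    · rw [List.length_ofFn, hlen w hw]
    · intro n h1 h2
      simp only [List.getElem_ofFn, Finsupp.onFinset_apply]
      rw [List.getD_eq_getElem _ _ h2]
  · -- right inverse
    intro l hl
    ext n
    simp only [Finsupp.onFinset_apply]
    rcases lt_or_ge n z with h | h
    · rw [List.getD_eq_getElem _ _ (by simpa using h)]
      simp
    · rw [List.getD_eq_default _ _ (by simpa using h)]
      by_contra hne
      have hmem : n ∈ l.support := Finsupp.mem_support_iff.2 (fun hc => hne hc.symm)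
      have := (Finset.mem_finsuppAntidiag.1 (Finset.mem_filter.1 hl).1).2 hmem
      rw [Finset.mem_range] at this; omega

lemma aux_sum_antidiagonalTuple (m L : ℕ) (c : ℝ) :
    ∑ k ∈ Finset.Nat.antidiagonalTuple m L, ∏ i, c ^ (k i) / ((k i)! : ℝ)
      = c ^ L * m ^ L / (L)! := by
  classical
  rw [← Finset.piAntidiag_univ_fin_eq_antidiagonalTuple L m]
  have hm : ((m : ℝ)) ^ L
      = ∑ k ∈ Finset.piAntidiag (Finset.univ : Finset (Fin m)) L, (Nat.multinomial Finset.univ k : ℝ) := by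
    have h := Finset.sum_pow_eq_sum_piAntidiag (Finset.univ : Finset (Fin m)) (fun _ => (1 : ℝ)) L
    simpa using h
  have step : ∀ k ∈ Finset.piAntidiag (Finset.univ : Finset (Fin m)) L,
      ∏ i, c ^ (k i) / ((k i)! : ℝ)
        = c ^ L / (L)! * (Nat.multinomial Finset.univ k : ℝ) := by
    intro k hk
    rw [Finset.mem_piAntidiag] at hk
    have hsum : ∑ i, k i = L := hk.1
    have hspec := Nat.multinomial_spec (Finset.univ : Finset (Fin m)) k
    rw [hsum] at hspec
    have hcast : ((∏ i, (k i)! : ℕ) : ℝ) * (Nat.multinomial Finset.univ k : ℝ) = ((L)! : ℝ) := by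
      exact_mod_cast congrArg (Nat.cast (R := ℝ)) hspec
    have hP : ((∏ i, (k i)! : ℕ) : ℝ) ≠ 0 := by positivity
    have hL : ((L)! : ℝ) ≠ 0 := by positivity
    simp only [div_eq_mul_inv]
    rw [Finset.prod_mul_distrib, Finset.prod_pow_eq_pow_sum, hsum]
    push_cast at hcast hP
    rw [Finset.prod_inv_distrib]
    field_simp
    linear_combination (-(c ^ L)) * hcast
  rw [Finset.sum_congr rfl step, ← Finset.mul_sum, ← hm]
  ring

end Comb


/-- **Proposition 2 (formal power series form).** If `F₁, …, F_m` are formal power series with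
zero constant coefficients over a normed `ℝ`-algebra with submultiplicative norm, and
`‖coeff_j Fᵢ‖ ≤ c̄` for all `i` and all `j ≥ 1`, then for every `p ≥ 1`,
`‖coeff_p (exp F₁ ⋯ exp F_m)‖ ≤ Σ_{w ∈ C(p)} Σ_{k₁+⋯+k_m = dim w} c̄^{k₁}⋯c̄^{k_m}/(k₁!⋯k_m!)`. -/
theorem norm_coeff_prod_expOf_le {A : Type*} [NormedRing A] [NormedAlgebra ℝ A] [NormOneClass A]
    (m : ℕ) (hm : 1 ≤ m) (F : Fin m → PowerSeries A)
    (hF0 : ∀ i, PowerSeries.constantCoeff (R := A) (F i) = 0)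
    (cbar : ℝ) (hFc : ∀ i, ∀ j : ℕ, 1 ≤ j → ‖PowerSeries.coeff (R := A) j (F i)‖ ≤ cbar)
    (p : ℕ) (hp : 1 ≤ p) :
    ‖PowerSeries.coeff (R := A) p (List.ofFn fun i => PowerSeries.expOf (F i)).prod‖ ≤
      ∑ w : Composition p, ∑ k ∈ Finset.Nat.antidiagonalTuple m w.length,
        ∏ i, cbar ^ (k i) / ((k i)! : ℝ) := by
  classical
  have hc0 : 0 ≤ cbar := le_trans (norm_nonneg _) (hFc ⟨0, hm⟩ 1 le_rfl)
  set G : PowerSeries ℝ := PowerSeries.mk (fun j => if j = 0 then 0 else cbar) with hGdef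
  have hG0 : constantCoeff (R := ℝ) G = 0 := by
    rw [hGdef, PowerSeries.constantCoeff_mk]; simp
  have hdom : ∀ i j, ‖coeff (R := A) j (F i)‖ ≤ coeff (R := ℝ) j G := by
    intro i j
    rcases Nat.eq_zero_or_pos j with rfl | hj
    · rw [coeff_zero_eq_constantCoeff_apply, coeff_zero_eq_constantCoeff_apply, hF0 i, hG0]
      simp
    · rw [hGdef, coeff_mk, if_neg (by omega)]
      exact hFc i j hj
  have h1 : ‖coeff (R := A) p (List.ofFn fun i => expOf (F i)).prod‖
      ≤ coeff (R := ℝ) p (List.ofFn fun _ : Fin m => expOf G).prod :=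
    aux_norm_coeff_list_prod_le m _ _ (fun i j => aux_norm_coeff_expOf_le (hdom i) j) p
  have h2 : (List.ofFn fun _ : Fin m => expOf G).prod = (expOf G) ^ m := by
    rw [List.ofFn_const, List.prod_replicate]
  -- coefficient of `G ^ z`
  have hGz : ∀ z : ℕ, coeff (R := ℝ) p (G ^ z)
      = (((Finset.finsuppAntidiag (range z) p).filter
          (fun l => ∀ i ∈ range z, l i ≠ 0)).card : ℝ) * cbar ^ z := by
    intro z
    rw [coeff_pow]
    have hterm : ∀ l ∈ Finset.finsuppAntidiag (range z) p,
        (∏ i ∈ range z, coeff (R := ℝ) (l i) G)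
          = if (∀ i ∈ range z, l i ≠ 0) then cbar ^ z else 0 := by
      intro l _
      split_ifs with hcond
      · have : ∀ i ∈ range z, coeff (R := ℝ) (l i) G = cbar := by
          intro i hi
          rw [hGdef, coeff_mk, if_neg (hcond i hi)]
        rw [Finset.prod_congr rfl this, Finset.prod_const, Finset.card_range]
      · push_neg at hcond
        obtain ⟨i, hi, hi0⟩ := hcond
        apply Finset.prod_eq_zero hi
        rw [hGdef, coeff_mk, hi0, if_pos rfl]
    rw [Finset.sum_congr rfl hterm, ← Finset.sum_filter, Finset.sum_const, nsmul_eq_mul]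
  -- value of the real coefficient
  have h3 : coeff (R := ℝ) p ((expOf G) ^ m)
      = ∑ w : Composition p, cbar ^ w.length * (m : ℝ) ^ w.length / ((w.length)! : ℝ) := by
    rw [aux_expOf_pow hG0 m, expOf, coeff_mk]
    have hfib : ∑ w : Composition p, cbar ^ w.length * (m : ℝ) ^ w.length / ((w.length)! : ℝ)
        = ∑ z ∈ range (p+1), ∑ w ∈ Finset.univ.filter (fun w : Composition p => w.length = z),
            cbar ^ w.length * (m : ℝ) ^ w.length / ((w.length)! : ℝ) := by
      rw [Finset.sum_fiberwise_eq_sum_filter]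
      have huniv : Finset.univ.filter (fun w : Composition p => w.length ∈ range (p+1))
          = Finset.univ := by
        apply Finset.filter_true_of_mem
        intro w _
        exact Finset.mem_range.2 (Nat.lt_succ_of_le w.length_le)
      rw [huniv]
    rw [hfib]
    apply Finset.sum_congr rfl
    intro z _
    have hinner : ∑ w ∈ Finset.univ.filter (fun w : Composition p => w.length = z),
        cbar ^ w.length * (m : ℝ) ^ w.length / ((w.length)! : ℝ)
        = ((Finset.univ.filter (fun w : Composition p => w.length = z)).card : ℝ)
            * (cbar ^ z * (m : ℝ) ^ z / (z ! : ℝ)) := by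
      rw [Finset.sum_congr rfl (fun w hw => by
        rw [(Finset.mem_filter.1 hw).2]), Finset.sum_const, nsmul_eq_mul]
    rw [hinner, aux_card_comp p z]
    have : coeff (R := ℝ) p (((m : ℝ) • G) ^ z) = (m : ℝ) ^ z * coeff (R := ℝ) p (G ^ z) := by
      rw [smul_pow, PowerSeries.coeff_smul, smul_eq_mul]
    rw [this, hGz z, smul_eq_mul]
    ring
  have hRHS : ∑ w : Composition p, ∑ k ∈ Finset.Nat.antidiagonalTuple m w.length,
      ∏ i, cbar ^ (k i) / ((k i)! : ℝ)
      = ∑ w : Composition p, cbar ^ w.length * (m : ℝ) ^ w.length / ((w.length)! : ℝ) := by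
    apply Finset.sum_congr rfl
    intro w _
    rw [aux_sum_antidiagonalTuple m w.length cbar]
  rw [hRHS, ← h3, ← h2]
  exact h1
end

section
/- (Proposition 2 of the paper, analytic form.) Let 𝒜 be a unital Banach algebra, let m ≥ 1, s ≥ 1, and for i = 1,…,m and j ≥ 1 let β_{i,j} ∈ 𝒜 with ‖β_{i,j}‖ ≤ c̄. For |h| < 1 define Ũ(h) := Π_{i=1}^m exp( Σ_{j=1}^∞ β_{i,j} h^j ), where exp is the Banach-algebra exponential and the inner series converges absolutely. Then Ũ is analytic at h = 0, and its Taylor coefficients Ũ_p (so that Ũ(h) = Σ_{p=0}^∞ Ũ_p h^p near 0) satisfy, for every p ≥ 1, ‖Ũ_p‖ ≤ Σ_{w ∈ C(p)} Σ_{(k_1,…,k_m) ∈ ℕ^m : k_1+⋯+k_m = dim w} (c̄^{k_1} ⋯ c̄^{k_m}) / (k_1! ⋯ k_m!). Consequently Σ_{p=2s+1}^∞ ‖Ũ_p‖ h^p is bounded by Σ_{p=2s+1}^∞ h^p Σ_{w ∈ C(p)} Σ_{k_1+⋯+k_m = dim w} c̄^{k_1}⋯c̄^{k_m}/(k_1!⋯k_m!)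 whenever the latter converges. -/
open scoped Nat

/-- The weak-composition bound
`Σ_{w ∈ C(p)} Σ_{k₁+⋯+k_m = dim w} c̄^{k₁} ⋯ c̄^{k_m} / (k₁! ⋯ k_m!)`. -/
noncomputable def cfqmCompBound (m : ℕ) (cbar : ℝ) (p : ℕ) : ℝ :=
  ∑ w : Composition p, ∑ k ∈ Finset.Nat.antidiagonalTuple m w.length,
    ∏ i, cbar ^ (k i) / ((k i)! : ℝ)

private lemma list_eq_of_flatten_eq : ∀ (L₁ L₂ : List (List ℕ)),
    L₁.map List.length = L₂.map List.length → L₁.flatten = L₂.flatten → L₁ = L₂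
  | [], [], _, _ => rfl
  | [], _ :: _, h, _ => by simp at h
  | _ :: _, [], h, _ => by simp at h
  | a :: L₁, b :: L₂, h, hf => by
      simp only [List.map_cons, List.cons.injEq] at h
      simp only [List.flatten_cons] at hf
      obtain ⟨hab, hrest⟩ := List.append_inj hf h.1
      rw [hab, list_eq_of_flatten_eq L₁ L₂ h.2 hrest]

private lemma sum_adt_succ {M : Type*} [AddCommMonoid M] (k p : ℕ) (f : (Fin (k + 1) → ℕ) → M) :
    ∑ x ∈ Finset.Nat.antidiagonalTuple (k + 1) p, f x
      = ∑ ab ∈ Finset.HasAntidiagonal.antidiagonal p, ∑ x ∈ Finset.Nat.antidiagonalTuple k ab.2,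
          f (Fin.cons ab.1 x) := by
  rw [Finset.sum_sigma']
  refine Finset.sum_nbij' (fun x => ⟨(x 0, ∑ i, x (Fin.succ i)), Fin.tail x⟩)
    (fun y => Fin.cons y.1.1 y.2) ?_ ?_ ?_ ?_ ?_
  · intro x hx
    rw [Finset.Nat.mem_antidiagonalTuple] at hx
    rw [Finset.mem_sigma]
    refine ⟨?_, ?_⟩
    · rw [Finset.HasAntidiagonal.mem_antidiagonal]
      rw [← hx, Fin.sum_univ_succ]
    · rw [Finset.Nat.mem_antidiagonalTuple]
      rfl
  · rintro ⟨⟨a, b⟩, x⟩ hy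
    rw [Finset.mem_sigma, Finset.HasAntidiagonal.mem_antidiagonal, Finset.Nat.mem_antidiagonalTuple] at hy
    rw [Finset.Nat.mem_antidiagonalTuple, Fin.sum_univ_succ]
    simpa [hy.2] using hy.1
  · intro x hx
    simp [Fin.cons_self_tail]
  · rintro ⟨⟨a, b⟩, x⟩ hy
    rw [Finset.mem_sigma, Finset.HasAntidiagonal.mem_antidiagonal, Finset.Nat.mem_antidiagonalTuple] at hy
    simp [Fin.tail, hy.2]
  · intro x hx
    simp [Fin.cons_self_tail]

private def joinComposition {m p : ℕ} (x : Fin m → ℕ) (hx : ∑ i, x i = p)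
    (c : ∀ i, Composition (x i)) : Composition p where
  blocks := (List.ofFn fun i => (c i).blocks).flatten
  blocks_pos := by
    intro j hj
    rw [List.mem_flatten] at hj
    obtain ⟨l, hl, hjl⟩ := hj
    rw [List.mem_ofFn] at hl
    obtain ⟨i, rfl⟩ := hl
    exact (c i).blocks_pos hjl
  blocks_sum := by
    rw [List.sum_flatten, List.map_ofFn, List.sum_ofFn]
    simp only [Function.comp_apply, Composition.blocks_sum]
    exact hx

private lemma joinComposition_length {m p : ℕ} (x : Fin m → ℕ) (hx : ∑ i, x i = p)
    (c : ∀ i, Composition (x i)) :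
    (joinComposition x hx c).length = ∑ i, (c i).length := by
  show (joinComposition x hx c).blocks.length = _
  rw [show (joinComposition x hx c).blocks = (List.ofFn fun i => (c i).blocks).flatten from rfl,
    List.length_flatten, List.map_ofFn, List.sum_ofFn]
  rfl

private lemma comp_bound_le (m : ℕ) (cbar : ℝ) (hc : 0 ≤ cbar) (p : ℕ) :
    ∑ x ∈ Finset.Nat.antidiagonalTuple m p,
        ∏ i, (∑ c : Composition (x i), cbar ^ c.length / (c.length)!)
      ≤ cfqmCompBound m cbar p := by
  classical
  simp only [Finset.prod_univ_sum]
  rw [Finset.sum_sigma']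
  unfold cfqmCompBound
  rw [Finset.sum_sigma']
  set T : Finset ((_ : Composition p) × (Fin m → ℕ)) :=
    Finset.univ.sigma fun w : Composition p => Finset.Nat.antidiagonalTuple m w.length with hT
  set g : ((_ : Composition p) × (Fin m → ℕ)) → ℝ :=
    fun y => ∏ i, cbar ^ (y.2 i) / ((y.2 i)! : ℝ) with hg
  set θmap : ((x : Fin m → ℕ) × (∀ i, Composition (x i))) → ((_ : Composition p) × (Fin m → ℕ)) :=
    fun z => if h : ∑ i, z.1 i = p then
      ⟨joinComposition z.1 h z.2, fun i => (z.2 i).length⟩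
    else ⟨Composition.ones p, fun _ => 0⟩ with hθmap
  have hmem : ∀ z ∈ (Finset.Nat.antidiagonalTuple m p).sigma
      (fun x => Fintype.piFinset fun i => (Finset.univ : Finset (Composition (x i)))),
      ∑ i, z.1 i = p := by
    intro z hz
    rw [Finset.mem_sigma] at hz
    exact Finset.Nat.mem_antidiagonalTuple.mp hz.1
  have hinj : ∀ z ∈ (Finset.Nat.antidiagonalTuple m p).sigma
      (fun x => Fintype.piFinset fun i => (Finset.univ : Finset (Composition (x i)))),
      ∀ z' ∈ (Finset.Nat.antidiagonalTuple m p).sigma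
      (fun x => Fintype.piFinset fun i => (Finset.univ : Finset (Composition (x i)))),
      θmap z = θmap z' → z = z' := by
    rintro ⟨x, c⟩ hz ⟨x', c'⟩ hz' heq
    have h1 := hmem _ hz
    have h2 := hmem _ hz'
    rw [hθmap] at heq
    simp only [dif_pos h1, dif_pos h2] at heq
    obtain ⟨hw, hk⟩ := Sigma.mk.inj_iff.mp heq
    replace hk : (fun i => (c i).length) = fun i => (c' i).length := eq_of_heq hk
    have hblocks : ((List.ofFn fun i => (c i).blocks)).flatten
        = ((List.ofFn fun i => (c' i).blocks)).flatten := congrArg Composition.blocks hw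
    have hlen : (List.ofFn fun i => (c i).blocks).map List.length
        = (List.ofFn fun i => (c' i).blocks).map List.length := by
      rw [List.map_ofFn, List.map_ofFn]
      exact congrArg List.ofFn (funext fun i => congrFun hk i)
    have hofn := list_eq_of_flatten_eq _ _ hlen hblocks
    rw [List.ofFn_inj] at hofn
    have hx : x = x' := by
      funext i
      rw [← (c i).blocks_sum, ← (c' i).blocks_sum, congrFun hofn i]
    subst hx
    have : c = c' := by
      funext i
      exact Composition.ext (congrFun hofn i)
    rw [this]
  calc ∑ z ∈ (Finset.Nat.antidiagonalTuple m p).sigma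
        (fun x => Fintype.piFinset fun i => (Finset.univ : Finset (Composition (x i)))),
        ∏ i, cbar ^ (z.2 i).length / ((z.2 i).length ! : ℝ)
      = ∑ z ∈ (Finset.Nat.antidiagonalTuple m p).sigma
        (fun x => Fintype.piFinset fun i => (Finset.univ : Finset (Composition (x i)))),
        g (θmap z) := by
        refine Finset.sum_congr rfl fun z hz => ?_
        rw [hθmap, hg]
        simp only [dif_pos (hmem _ hz)]
    _ = ∑ y ∈ Finset.image θmap ((Finset.Nat.antidiagonalTuple m p).sigma
        (fun x => Fintype.piFinset fun i => (Finset.univ : Finset (Composition (x i))))), g y :=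
        (Finset.sum_image hinj).symm
    _ ≤ ∑ y ∈ T, g y := by
        refine Finset.sum_le_sum_of_subset_of_nonneg ?_ (fun y _ _ => ?_)
        · intro y hy
          rw [Finset.mem_image] at hy
          obtain ⟨z, hz, rfl⟩ := hy
          have h1 := hmem _ hz
          rw [hθmap]
          simp only [dif_pos h1]
          rw [hT, Finset.mem_sigma]
          refine ⟨Finset.mem_univ _, ?_⟩
          rw [Finset.Nat.mem_antidiagonalTuple, joinComposition_length]
        · rw [hg]
          refine Finset.prod_nonneg fun i _ => ?_
          positivity

set_option maxHeartbeats 1000000 in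
private lemma prod_expansion {𝒜 : Type*} [NormedRing 𝒜] [NormedAlgebra ℝ 𝒜] [CompleteSpace 𝒜]
    [NormOneClass 𝒜] (ε : ℝ) (A : ℕ → ℝ) :
    ∀ (n : ℕ) (F : Fin n → ℝ → 𝒜) (u : Fin n → ℕ → 𝒜),
    (∀ i p, ‖u i p‖ ≤ A p) →
    (∀ i (z : ℝ), |z| < ε → HasSum (fun q => z ^ q • u i q) (F i z) ∧
        Summable (fun q => ‖z ^ q • u i q‖)) →
    ∃ U : ℕ → 𝒜,
      (∀ p, ‖U p‖ ≤ ∑ x ∈ Finset.Nat.antidiagonalTuple n p, ∏ i, A (x i)) ∧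
      (∀ z : ℝ, |z| < ε → HasSum (fun q => z ^ q • U q) ((List.ofFn fun i => F i z).prod) ∧
        Summable (fun q => ‖z ^ q • U q‖)) := by
  intro n
  induction n with
  | zero =>
    intro F u _ _
    refine ⟨fun p => if p = 0 then 1 else 0, ?_, ?_⟩
    · intro p
      match p with
      | 0 => simp [Finset.Nat.antidiagonalTuple_zero_zero]
      | q + 1 => simp [Finset.Nat.antidiagonalTuple_zero_succ]
    · intro z _
      constructor
      · have h1 : ∀ q : ℕ, q ≠ 0 → z ^ q • (if q = 0 then (1 : 𝒜) else 0) = 0 := by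
          intro q hq; simp [hq]
        have := hasSum_single (f := fun q => z ^ q • (if q = 0 then (1 : 𝒜) else 0)) 0 h1
        simpa using this
      · refine summable_of_ne_finset_zero (s := {0}) fun q hq => ?_
        simp only [Finset.mem_singleton] at hq
        simp [hq]
  | succ n ih =>
    intro F u hA hFu
    obtain ⟨V, hVb, hVs⟩ := ih (fun i => F i.succ) (fun i => u i.succ)
      (fun i p => hA i.succ p) (fun i z hz => hFu i.succ z hz)
    have hA0 : ∀ p, 0 ≤ A p := fun p => le_trans (norm_nonneg _) (hA 0 p)
    refine ⟨fun p => ∑ kl ∈ Finset.HasAntidiagonal.antidiagonal p, u 0 kl.1 * V kl.2, ?_, ?_⟩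
    · intro p
      calc ‖∑ kl ∈ Finset.HasAntidiagonal.antidiagonal p, u 0 kl.1 * V kl.2‖
          ≤ ∑ kl ∈ Finset.HasAntidiagonal.antidiagonal p, ‖u 0 kl.1 * V kl.2‖ := norm_sum_le _ _
        _ ≤ ∑ kl ∈ Finset.HasAntidiagonal.antidiagonal p,
              A kl.1 * ∑ x ∈ Finset.Nat.antidiagonalTuple n kl.2, ∏ i, A (x i) := by
            refine Finset.sum_le_sum fun kl _ => ?_
            refine le_trans (norm_mul_le _ _) ?_
            exact mul_le_mul (hA 0 kl.1) (hVb kl.2) (norm_nonneg _) (hA0 kl.1)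
        _ = ∑ kl ∈ Finset.HasAntidiagonal.antidiagonal p, ∑ x ∈ Finset.Nat.antidiagonalTuple n kl.2,
              ∏ i, A ((Fin.cons kl.1 x : Fin (n+1) → ℕ) i) := by
            refine Finset.sum_congr rfl fun kl _ => ?_
            rw [Finset.mul_sum]
            refine Finset.sum_congr rfl fun x _ => ?_
            rw [Fin.prod_univ_succ]
            simp
        _ = ∑ x ∈ Finset.Nat.antidiagonalTuple (n + 1) p, ∏ i, A (x i) :=
            (sum_adt_succ n p fun x => ∏ i, A (x i)).symm
    · intro z hz
      have h0 := hFu 0 z hz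
      have hV := hVs z hz
      have key : (fun q => z ^ q • ∑ kl ∈ Finset.HasAntidiagonal.antidiagonal q, u 0 kl.1 * V kl.2)
          = fun q => ∑ kl ∈ Finset.HasAntidiagonal.antidiagonal q,
              (z ^ kl.1 • u 0 kl.1) * (z ^ kl.2 • V kl.2) := by
        funext q
        rw [Finset.smul_sum]
        refine Finset.sum_congr rfl fun kl hkl => ?_
        rw [smul_mul_smul_comm, ← pow_add, Finset.HasAntidiagonal.mem_antidiagonal.mp hkl]
      have hnorm : Summable fun q => ‖∑ kl ∈ Finset.HasAntidiagonal.antidiagonal q,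
          (z ^ kl.1 • u 0 kl.1) * (z ^ kl.2 • V kl.2)‖ :=
        summable_norm_sum_mul_antidiagonal_of_summable_norm (f := fun q => z ^ q • u 0 q)
          (g := fun q => z ^ q • V q) h0.2 hV.2
      have hsum : Summable fun q => ∑ kl ∈ Finset.HasAntidiagonal.antidiagonal q,
          (z ^ kl.1 • u 0 kl.1) * (z ^ kl.2 • V kl.2) := hnorm.of_norm
      have htsum : ∑' q, ∑ kl ∈ Finset.HasAntidiagonal.antidiagonal q,
          (z ^ kl.1 • u 0 kl.1) * (z ^ kl.2 • V kl.2)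
          = F 0 z * (List.ofFn fun i => F i.succ z).prod := by
        rw [← tsum_mul_tsum_eq_tsum_sum_antidiagonal_of_summable_norm (f := fun q => z ^ q • u 0 q)
          (g := fun q => z ^ q • V q) h0.2 hV.2,
          h0.1.tsum_eq, hV.1.tsum_eq]
      constructor
      · rw [key, List.ofFn_succ, List.prod_cons]
        exact htsum ▸ hsum.hasSum
      · rw [show (fun q => ‖z ^ q • ∑ kl ∈ Finset.HasAntidiagonal.antidiagonal q, u 0 kl.1 * V kl.2‖)
            = fun q => ‖∑ kl ∈ Finset.HasAntidiagonal.antidiagonal q,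
              (z ^ kl.1 • u 0 kl.1) * (z ^ kl.2 • V kl.2)‖ from funext fun q => by
              rw [congrFun key q]]
        exact hnorm

/-- **Proposition 2 (analytic form).** Let `𝒜` be a unital Banach algebra, `m, s ≥ 1`, and
`β_{i,j} ∈ 𝒜` with `‖β_{i,j}‖ ≤ c̄` for `j ≥ 1`. For `|h| < 1` set
`Ũ(h) := Π_{i=1}^m exp(Σ_{j≥1} β_{i,j} h^j)` (the inner series converging absolutely). Then
`Ũ` is analytic at `0` with Taylor coefficients `U_p` (so `Ũ(h) = Σ_p U_p h^p` near `0`)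
satisfying `‖U_p‖ ≤ cfqmCompBound m c̄ p` for `p ≥ 1`; consequently
`Σ_{p=2s+1}^∞ ‖U_p‖ h^p ≤ Σ_{p=2s+1}^∞ h^p · cfqmCompBound m c̄ p`
whenever the latter converges. -/
theorem cfqm_taylor_coeff_bound {𝒜 : Type*} [NormedRing 𝒜] [NormedAlgebra ℝ 𝒜]
    [CompleteSpace 𝒜] [NormOneClass 𝒜] (m s : ℕ) (hm : 1 ≤ m) (hs : 1 ≤ s)
    (β : Fin m → ℕ → 𝒜) (cbar : ℝ) (hβ : ∀ i, ∀ j : ℕ, 1 ≤ j → ‖β i j‖ ≤ cbar) :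
    (∀ h : ℝ, |h| < 1 → ∀ i, Summable fun j : ℕ => ‖h ^ (j + 1) • β i (j + 1)‖) ∧
    ∃ U : ℕ → 𝒜,
      (∃ ε > 0, ∀ h : ℝ, |h| < ε →
        HasSum (fun p : ℕ => h ^ p • U p)
          ((List.ofFn fun i : Fin m =>
            NormedSpace.exp (∑' j : ℕ, h ^ (j + 1) • β i (j + 1))).prod)) ∧
      (∀ p : ℕ, 1 ≤ p → ‖U p‖ ≤ cfqmCompBound m cbar p) ∧
      (∀ h : ℝ, 0 ≤ h → h < 1 →
        Summable (fun p : ℕ =>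
          h ^ (p + (2 * s + 1)) * cfqmCompBound m cbar (p + (2 * s + 1))) →
        ∑' p : ℕ, ‖U (p + (2 * s + 1))‖ * h ^ (p + (2 * s + 1)) ≤
          ∑' p : ℕ, h ^ (p + (2 * s + 1)) * cfqmCompBound m cbar (p + (2 * s + 1))) := by
  classical
  have hc0 : 0 ≤ cbar := le_trans (norm_nonneg (β ⟨0, hm⟩ 1)) (hβ ⟨0, hm⟩ 1 le_rfl)
  have hsum1 : ∀ h : ℝ, |h| < 1 → ∀ i, Summable fun j : ℕ => ‖h ^ (j + 1) • β i (j + 1)‖ := by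
    intro h hh i
    have hgeo : Summable fun j : ℕ => cbar * |h| ^ (j + 1) := by
      have := (summable_geometric_of_lt_one (abs_nonneg h) hh).mul_left (cbar * |h|)
      refine this.congr fun j => ?_
      rw [pow_succ]
      ring
    refine hgeo.of_nonneg_of_le (fun j => norm_nonneg _) fun j => ?_
    rw [norm_smul, norm_pow, Real.norm_eq_abs]
    calc |h| ^ (j + 1) * ‖β i (j + 1)‖
        ≤ |h| ^ (j + 1) * cbar :=
          mul_le_mul_of_nonneg_left (hβ i (j + 1) (Nat.le_add_left 1 j))
            (pow_nonneg (abs_nonneg h) _)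
      _ = cbar * |h| ^ (j + 1) := mul_comm _ _
  refine ⟨hsum1, ?_⟩
  set b : Fin m → ℕ → 𝒜 := fun i n => if n = 0 then 0 else β i n with hb
  have hbnorm : ∀ i n, ‖b i n‖ ≤ cbar := by
    intro i n
    match n with
    | 0 => simpa [hb] using hc0
    | n + 1 => simpa [hb] using hβ i (n + 1) (Nat.le_add_left 1 n)
  set P : Fin m → FormalMultilinearSeries ℝ ℝ 𝒜 :=
    fun i n => ContinuousMultilinearMap.mkPiRing ℝ (Fin n) (b i n) with hP
  have hPcoeff : ∀ i n, (P i).coeff n = b i n := by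
    intro i n
    simp [hP, FormalMultilinearSeries.coeff, ContinuousMultilinearMap.mkPiRing_apply]
  have hPnorm : ∀ i n, ‖P i n‖ = ‖b i n‖ := by
    intro i n
    rw [hP]
    exact ContinuousMultilinearMap.norm_mkPiRing _
  have hg0 : ∀ i, (∑' j : ℕ, (0 : ℝ) ^ (j + 1) • β i (j + 1)) = 0 := by
    intro i
    simp
  have hgP : ∀ i, HasFPowerSeriesAt
      (fun h : ℝ => ∑' j : ℕ, h ^ (j + 1) • β i (j + 1)) (P i) 0 := by
    intro i
    rw [hasFPowerSeriesAt_iff]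
    filter_upwards [Metric.ball_mem_nhds (0 : ℝ) one_pos] with z hz
    rw [Metric.mem_ball, Real.dist_eq, sub_zero] at hz
    have hsummable : Summable fun n : ℕ => z ^ n • b i n := by
      apply Summable.of_norm
      have hgeo : Summable fun n : ℕ => cbar * |z| ^ n :=
        (summable_geometric_of_lt_one (abs_nonneg z) hz).mul_left cbar
      refine hgeo.of_nonneg_of_le (fun n => norm_nonneg _) fun n => ?_
      rw [norm_smul, norm_pow, Real.norm_eq_abs]
      calc |z| ^ n * ‖b i n‖
          ≤ |z| ^ n * cbar :=
            mul_le_mul_of_nonneg_left (hbnorm i n) (pow_nonneg (abs_nonneg z) n)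
        _ = cbar * |z| ^ n := mul_comm _ _
    have htsum : (∑' n : ℕ, z ^ n • b i n) = ∑' j : ℕ, z ^ (j + 1) • β i (j + 1) := by
      rw [Summable.tsum_eq_zero_add hsummable]
      simp [hb]
    have hfin := hsummable.hasSum
    rw [htsum] at hfin
    have hfun : (fun n : ℕ => z ^ n • (P i).coeff n) = fun n : ℕ => z ^ n • b i n := by
      funext n
      rw [hPcoeff]
    rw [hfun]
    simpa using hfin
  set S : Fin m → FormalMultilinearSeries ℝ ℝ 𝒜 :=
    fun i => (NormedSpace.expSeries ℝ 𝒜).comp (P i) with hS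
  have hFS : ∀ i, HasFPowerSeriesAt
      (fun h : ℝ => NormedSpace.exp (∑' j : ℕ, h ^ (j + 1) • β i (j + 1))) (S i) 0 := by
    intro i
    have hexp : HasFPowerSeriesAt (NormedSpace.exp) (NormedSpace.expSeries ℝ 𝒜) (0 : 𝒜) :=
      NormedSpace.hasFPowerSeriesAt_exp_zero_of_radius_pos (NormedSpace.expSeries_radius_pos ℝ 𝒜)
    rw [← hg0 i] at hexp
    exact HasFPowerSeriesAt.comp (g := NormedSpace.exp)
      (f := fun h : ℝ => ∑' j : ℕ, h ^ (j + 1) • β i (j + 1)) (x := 0) hexp (hgP i)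
  have hqnorm : ∀ k : ℕ, ‖NormedSpace.expSeries ℝ 𝒜 k‖ ≤ ((k ! : ℝ))⁻¹ := by
    intro k
    rw [NormedSpace.expSeries_eq_ofScalars, FormalMultilinearSeries.ofScalars_norm,
      Real.norm_eq_abs, abs_of_nonneg (by positivity)]
  have hSbound : ∀ (i : Fin m) (n : ℕ),
      ‖(S i).coeff n‖ ≤ ∑ c : Composition n, cbar ^ c.length / ((c.length)! : ℝ) := by
    intro i n
    rw [← FormalMultilinearSeries.norm_apply_eq_norm_coef]
    have hrfl : (S i) n = ∑ c : Composition n,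
        (NormedSpace.expSeries ℝ 𝒜).compAlongComposition (P i) c := rfl
    rw [hrfl]
    refine le_trans (norm_sum_le _ _) ?_
    refine Finset.sum_le_sum fun c _ => ?_
    refine le_trans (FormalMultilinearSeries.compAlongComposition_norm _ _ c) ?_
    have h1 : ∏ j, ‖P i (c.blocksFun j)‖ ≤ cbar ^ c.length := by
      calc ∏ j, ‖P i (c.blocksFun j)‖
          ≤ ∏ _j : Fin c.length, cbar := by
            refine Finset.prod_le_prod (fun j _ => norm_nonneg _) fun j _ => ?_
            rw [hPnorm]
            exact hbnorm i _
        _ = cbar ^ c.length := by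
            rw [Finset.prod_const, Finset.card_univ, Fintype.card_fin]
    calc ‖NormedSpace.expSeries ℝ 𝒜 c.length‖ * ∏ j, ‖P i (c.blocksFun j)‖
        ≤ ((c.length ! : ℝ))⁻¹ * cbar ^ c.length :=
          mul_le_mul (hqnorm _) h1 (Finset.prod_nonneg fun j _ => norm_nonneg _) (by positivity)
      _ = cbar ^ c.length / ((c.length)! : ℝ) := by
          rw [div_eq_mul_inv, mul_comm]
  have hr : ∀ i : Fin m, ∃ εi : ℝ, 0 < εi ∧ ∀ z : ℝ, |z| < εi →
      HasSum (fun q => z ^ q • (S i).coeff q)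
        ((fun h : ℝ => NormedSpace.exp (∑' j : ℕ, h ^ (j + 1) • β i (j + 1))) z) ∧
      Summable fun q => ‖z ^ q • (S i).coeff q‖ := by
    intro i
    have h1 := hFS i
    have hrad : (0 : ENNReal) < (S i).radius := h1.radius_pos
    obtain ⟨r', hr'0, hr'⟩ := ENNReal.lt_iff_exists_nnreal_btwn.mp hrad
    rw [hasFPowerSeriesAt_iff, Metric.eventually_nhds_iff] at h1
    obtain ⟨δ, hδ0, hδ⟩ := h1
    refine ⟨min δ r', lt_min hδ0 (by exact_mod_cast hr'0), fun z hz => ?_⟩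
    have hz1 : |z| < δ := lt_of_lt_of_le hz (min_le_left _ _)
    have hz2 : |z| < (r' : ℝ) := lt_of_lt_of_le hz (min_le_right _ _)
    constructor
    · have := hδ (show dist z 0 < δ by rwa [Real.dist_eq, sub_zero])
      simpa using this
    · have hlt : (‖z‖₊ : ENNReal) < (S i).radius := by
        refine lt_trans ?_ hr'
        rw [ENNReal.coe_lt_coe, ← NNReal.coe_lt_coe, coe_nnnorm, Real.norm_eq_abs]
        exact hz2
      have hsm := (S i).summable_norm_mul_pow hlt
      refine hsm.congr fun q => ?_
      rw [FormalMultilinearSeries.norm_apply_eq_norm_coef, norm_smul, norm_pow,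
        Real.norm_eq_abs, coe_nnnorm, Real.norm_eq_abs, mul_comm]
  choose εs hεs0 hεs using hr
  have hne : (Finset.univ : Finset (Fin m)).Nonempty := ⟨⟨0, hm⟩, Finset.mem_univ _⟩
  set ε := Finset.univ.inf' hne εs with hε
  have hε0 : 0 < ε := (Finset.lt_inf'_iff hne).mpr fun i _ => hεs0 i
  obtain ⟨U, hU1, hU2⟩ := prod_expansion ε
    (fun n => ∑ c : Composition n, cbar ^ c.length / ((c.length)! : ℝ)) m
    (fun i => fun h : ℝ => NormedSpace.exp (∑' j : ℕ, h ^ (j + 1) • β i (j + 1)))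
    (fun i => (S i).coeff) hSbound
    (fun i z hz => hεs i z (lt_of_lt_of_le hz (Finset.inf'_le _ (Finset.mem_univ i))))
  have hbound : ∀ p : ℕ, ‖U p‖ ≤ cfqmCompBound m cbar p := fun p =>
    le_trans (hU1 p) (comp_bound_le m cbar hc0 p)
  refine ⟨U, ⟨ε, hε0, fun h hh => (hU2 h hh).1⟩, fun p _ => hbound p, ?_⟩
  intro h h0 h1 hsumm
  have hterm : ∀ p : ℕ, ‖U (p + (2 * s + 1))‖ * h ^ (p + (2 * s + 1))
      ≤ h ^ (p + (2 * s + 1)) * cfqmCompBound m cbar (p + (2 * s + 1)) := by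
    intro p
    rw [mul_comm]
    exact mul_le_mul_of_nonneg_left (hbound (p + (2 * s + 1))) (pow_nonneg h0 _)
  have hLs : Summable fun p : ℕ => ‖U (p + (2 * s + 1))‖ * h ^ (p + (2 * s + 1)) :=
    hsumm.of_nonneg_of_le (fun p => mul_nonneg (norm_nonneg _) (pow_nonneg h0 _)) hterm
  exact Summable.tsum_le_tsum hterm hLs hsumm
end

section
/- (Proposition 3 of the paper.) Let a_0, a_1, a_2, … be skew-Hermitian complex d×d matrices with ‖a_j‖ ≤ c for all j, let 0 < h < 2, and let A(t) = Σ_{j=0}^∞ a_j t^j for |t| ≤ h/2. For g = 0,…,s−1 define the univariate integrals G_g := (1/h^g) ∫_{−h/2}^{h/2} t^g A(t) dt and let Q_0,…,Q_{s−1} be skew-Hermitian matrices (the Gauss–Legendre quadrature approximations) such that, for each g, there exists ξ_g with |ξ_g| < h/2 and G_g − Q_g = [h^{2s+1} (s!)^4 / ((2s+1) ((2s)!)^3)] · f_g^{(2s)}(ξ_g), where f_g(t) := (1/h^g) t^g A(t) = (1/h^g) Σ_{j=0}^∞ a_j t^{g+j}. Let y_{i,g} ∈ ℝ for i = 1,…,m,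 g = 0,…,s−1. Then ‖ Π_{i=1}^m exp(Σ_{g=0}^{s−1} y_{i,g} G_g) − Π_{i=1}^m exp(Σ_{g=0}^{s−1} y_{i,g} Q_g) ‖ ≤ Σ_{i=1}^m Σ_{g=0}^{s−1} |y_{i,g}| ‖G_g − Q_g‖ ≤ [h^{2s+1} (s!)^4 / ((2s+1)((2s)!)^3)] Σ_{i=1}^m Σ_{g=0}^{s−1} (|y_{i,g}| / h^g) Σ_{j=0}^∞ ((j+2s)!/j!) (h/2)^j c, in the operator norm. -/
open scoped Nat Matrix Matrix.Norms.L2Operator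
open MeasureTheory intervalIntegral

variable {d : ℕ}

/-- term-wise derivative -/
private lemma term_hasDerivAt (b : Matrix (Fin d) (Fin d) ℂ) (mm n : ℕ) (t : ℝ) :
    HasDerivAt (fun t : ℝ => ((mm.descFactorial n : ℝ) * t ^ (mm - n)) • b)
      (((mm.descFactorial (n+1) : ℝ) * t ^ (mm - (n+1))) • b) t := by
  rcases le_or_gt mm n with hmn | hmn
  · have h1 : mm - n = 0 := Nat.sub_eq_zero_of_le hmn
    have h2 : mm.descFactorial (n+1) = 0 :=
      Nat.descFactorial_eq_zero_iff_lt.mpr (Nat.lt_succ_of_le hmn)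
    simp only [h1, h2, pow_zero, mul_one, Nat.cast_zero, zero_mul, zero_smul]
    exact hasDerivAt_const t _
  · have key : HasDerivAt (fun t : ℝ => (mm.descFactorial n : ℝ) * t ^ (mm - n))
        ((mm.descFactorial (n+1) : ℝ) * t ^ (mm - (n+1))) t := by
      have h := (hasDerivAt_pow (mm - n) t).const_mul (mm.descFactorial n : ℝ)
      refine h.congr_deriv ?_
      have e1 : mm - n - 1 = mm - (n+1) := by omega
      have e2 : mm.descFactorial (n+1) = (mm - n) * mm.descFactorial n :=
        Nat.descFactorial_succ mm n
      rw [e2, ← e1]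
      push_cast
      ring
    exact key.smul_const b

private lemma summable_majorant (c : ℝ) (hc : 0 ≤ c) (r : ℝ) (hr0 : 0 < r) (hr1 : r < 1)
    (g n : ℕ) :
    Summable (fun j : ℕ => (((g + j).descFactorial n : ℝ) * r ^ (g + j - n)) * c) := by
  have h0 : Summable (fun k : ℕ => ((k : ℝ) ^ n * r ^ k)) :=
    summable_pow_mul_geometric_of_norm_lt_one n
      (by rwa [Real.norm_eq_abs, abs_of_nonneg hr0.le])
  have h1 : Summable (fun j : ℕ => (((g + j : ℕ) : ℝ) ^ n * r ^ (g + j))) :=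
    h0.comp_injective (fun x y hxy => by simpa using hxy : Function.Injective (g + ·))
  have h2 : Summable (fun j : ℕ => (((g + j : ℕ) : ℝ) ^ n * r ^ (g + j)) * (c / r ^ n)) :=
    h1.mul_right _
  refine h2.of_nonneg_of_le (fun j => by positivity) (fun j => ?_)
  have hA : ((g + j).descFactorial n : ℝ) ≤ ((g + j : ℕ) : ℝ) ^ n := by
    exact_mod_cast Nat.cast_le.mpr ((g + j).descFactorial_le_pow n)
  have hB : r ^ (g + j - n) ≤ r ^ (g + j) / r ^ n := by
    rw [le_div_iff₀ (pow_pos hr0 n), ← pow_add]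
    exact pow_le_pow_of_le_one hr0.le hr1.le (by omega)
  calc ((g + j).descFactorial n : ℝ) * r ^ (g + j - n) * c
      ≤ (((g + j : ℕ) : ℝ) ^ n * (r ^ (g + j) / r ^ n)) * c := by
        apply mul_le_mul_of_nonneg_right _ hc
        exact mul_le_mul hA hB (by positivity) (by positivity)
    _ = (((g + j : ℕ) : ℝ) ^ n * r ^ (g + j)) * (c / r ^ n) := by ring

private noncomputable def Fser {d : ℕ} (a : ℕ → Matrix (Fin d) (Fin d) ℂ) (g n : ℕ) (t : ℝ) :
    Matrix (Fin d) (Fin d) ℂ :=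
  ∑' j : ℕ, (((g + j).descFactorial n : ℝ) * t ^ (g + j - n)) • a j

private lemma term_norm_le (a : ℕ → Matrix (Fin d) (Fin d) ℂ) (c : ℝ) (hac : ∀ j, ‖a j‖ ≤ c)
    (r : ℝ) (g n : ℕ) {t : ℝ} (ht : |t| ≤ r) (j : ℕ) :
    ‖(((g + j).descFactorial n : ℝ) * t ^ (g + j - n)) • a j‖
      ≤ (((g + j).descFactorial n : ℝ) * r ^ (g + j - n)) * c := by
  have hr0 : (0:ℝ) ≤ r := le_trans (abs_nonneg t) ht
  rw [norm_smul, Real.norm_eq_abs, abs_mul,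
    abs_of_nonneg (by positivity : (0:ℝ) ≤ ((g + j).descFactorial n : ℝ)), abs_pow]
  apply mul_le_mul _ (hac j) (norm_nonneg _)
    (mul_nonneg (by positivity) (pow_nonneg hr0 _))
  exact mul_le_mul_of_nonneg_left (pow_le_pow_left₀ (abs_nonneg t) ht _) (by positivity)

private lemma summable_term_norm (a : ℕ → Matrix (Fin d) (Fin d) ℂ) (c : ℝ)
    (hac : ∀ j, ‖a j‖ ≤ c) (r : ℝ) (hr0 : 0 < r) (hr1 : r < 1) (g n : ℕ) {t : ℝ}
    (ht : |t| ≤ r) :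
    Summable (fun j : ℕ => ‖(((g + j).descFactorial n : ℝ) * t ^ (g + j - n)) • a j‖) := by
  have hc : 0 ≤ c := le_trans (norm_nonneg _) (hac 0)
  exact (summable_majorant c hc r hr0 hr1 g n).of_nonneg_of_le (fun j => norm_nonneg _)
    (term_norm_le a c hac r g n ht)

private lemma Fser_hasDerivAt (a : ℕ → Matrix (Fin d) (Fin d) ℂ) (c : ℝ)
    (hac : ∀ j, ‖a j‖ ≤ c) (r : ℝ) (hr0 : 0 < r) (hr1 : r < 1) (g n : ℕ) {t : ℝ}
    (ht : |t| < r) :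
    HasDerivAt (Fser a g n) (Fser a g (n+1) t) t := by
  have hc : 0 ≤ c := le_trans (norm_nonneg _) (hac 0)
  have hball : ∀ {x : ℝ}, x ∈ Metric.ball (0:ℝ) r ↔ |x| < r := by
    intro x; rw [mem_ball_zero_iff, Real.norm_eq_abs]
  refine hasDerivAt_tsum_of_isPreconnected
    (u := fun j : ℕ => (((g + j).descFactorial (n+1) : ℝ) * r ^ (g + j - (n+1))) * c)
    (summable_majorant c hc r hr0 hr1 g (n+1)) Metric.isOpen_ball
    (convex_ball (0:ℝ) r).isPreconnected
    (fun j x _ => term_hasDerivAt (a j) (g + j) n x)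
    (fun j x hx => term_norm_le a c hac r g (n+1) (hball.mp hx).le j)
    (hball.mpr (by simpa using hr0 : |(0:ℝ)| < r)) ?_ (hball.mpr ht)
  refine summable_of_ne_finset_zero (s := Finset.range (n+1)) (fun j hj => ?_)
  have hj' : n + 1 ≤ j := by simpa using hj
  have hne : g + j - n ≠ 0 := by omega
  simp [zero_pow hne]

private lemma iteratedDeriv_Fser (a : ℕ → Matrix (Fin d) (Fin d) ℂ) (c : ℝ)
    (hac : ∀ j, ‖a j‖ ≤ c) (r : ℝ) (hr0 : 0 < r) (hr1 : r < 1) (g : ℕ) (n : ℕ) :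
    ∀ t : ℝ, |t| < r → iteratedDeriv n (Fser a g 0) t = Fser a g n t := by
  induction n with
  | zero => intro t _; simp
  | succ n ih =>
    intro t ht
    rw [iteratedDeriv_succ]
    have hball : t ∈ Metric.ball (0:ℝ) r := by
      rw [mem_ball_zero_iff, Real.norm_eq_abs]; exact ht
    have hev : iteratedDeriv n (Fser a g 0) =ᶠ[nhds t] Fser a g n := by
      filter_upwards [Metric.isOpen_ball.mem_nhds hball] with x hx
      exact ih x (by rwa [mem_ball_zero_iff, Real.norm_eq_abs] at hx)
    rw [hev.deriv_eq]
    exact (Fser_hasDerivAt a c hac r hr0 hr1 g n ht).deriv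

private lemma descFactorial_cast_eq (k s : ℕ) :
    (((k + 2 * s).descFactorial (2 * s) : ℕ) : ℝ) = ((k + 2 * s)! : ℝ) / (k ! : ℝ) := by
  have h := Nat.factorial_mul_descFactorial (Nat.le_add_left (2 * s) k)
  have h2 : k + 2 * s - 2 * s = k := by omega
  rw [h2] at h
  have hk : (k ! : ℝ) ≠ 0 := by exact_mod_cast (Nat.factorial_pos k).ne'
  have h' : ((k ! * (k + 2 * s).descFactorial (2 * s) : ℕ) : ℝ) = ((k + 2 * s)! : ℝ) := by
    exact_mod_cast congrArg (Nat.cast : ℕ → ℝ) h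
  push_cast at h'
  rw [eq_div_iff hk]
  linarith [h']

private lemma summable_target (c : ℝ) (hc : 0 ≤ c) (x : ℝ) (hx0 : 0 < x) (hx1 : x < 1)
    (s : ℕ) :
    Summable (fun k : ℕ => (((k + 2 * s)! : ℝ) / (k ! : ℝ)) * x ^ k * c) := by
  refine (summable_majorant c hc x hx0 hx1 (2 * s) (2 * s)).congr (fun j => ?_)
  have e1 : 2 * s + j = j + 2 * s := by omega
  have e2 : 2 * s + j - 2 * s = j := by omega
  rw [e1, descFactorial_cast_eq, Nat.add_sub_cancel]

private lemma Fser_norm_bound (a : ℕ → Matrix (Fin d) (Fin d) ℂ) (c : ℝ)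
    (hac : ∀ j, ‖a j‖ ≤ c) (x : ℝ) (hx0 : 0 < x) (hx1 : x < 1) {t : ℝ} (ht : |t| ≤ x)
    (g s : ℕ) (hgs : g ≤ 2 * s) :
    ‖Fser a g (2 * s) t‖ ≤ ∑' k : ℕ, (((k + 2 * s)! : ℝ) / (k ! : ℝ)) * x ^ k * c := by
  have hc : 0 ≤ c := le_trans (norm_nonneg _) (hac 0)
  have hsum := summable_term_norm a c hac x hx0 hx1 g (2 * s) ht
  have hmaj := summable_majorant c hc x hx0 hx1 g (2 * s)
  refine le_trans (norm_tsum_le_tsum_norm hsum) ?_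
  refine le_trans (Summable.tsum_le_tsum (term_norm_le a c hac x g (2 * s) ht) hsum hmaj) ?_
  -- now rewrite the majorant series by shifting the index by 2*s - g
  set Δ := 2 * s - g with hΔ
  have hshift := (Summable.sum_add_tsum_nat_add (f := fun j : ℕ =>
      (((g + j).descFactorial (2 * s) : ℝ) * x ^ (g + j - 2 * s)) * c) Δ hmaj).symm
  rw [hshift]
  have hzero : (∑ j ∈ Finset.range Δ,
      (((g + j).descFactorial (2 * s) : ℝ) * x ^ (g + j - 2 * s)) * c) = 0 := by
    refine Finset.sum_eq_zero (fun j hj => ?_)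
    have : g + j < 2 * s := by have := Finset.mem_range.mp hj; omega
    rw [Nat.descFactorial_eq_zero_iff_lt.mpr this]
    simp
  rw [hzero, zero_add]
  refine le_of_eq (tsum_congr (fun k => ?_))
  have e1 : g + (k + Δ) = k + 2 * s := by omega
  have e2 : g + (k + Δ) - 2 * s = k := by omega
  rw [e1, descFactorial_cast_eq, Nat.add_sub_cancel]

private lemma Fser_skew (a : ℕ → Matrix (Fin d) (Fin d) ℂ) (ha : ∀ j, (a j)ᴴ = -a j)
    (g n : ℕ) (t : ℝ) : (Fser a g n t)ᴴ = -(Fser a g n t) := by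
  rw [← Matrix.star_eq_conjTranspose, Fser, tsum_star, ← tsum_neg]
  refine tsum_congr (fun j => ?_)
  rw [star_smul, star_trivial, Matrix.star_eq_conjTranspose, ha j, smul_neg]

private lemma exp_norm_le_one (X : Matrix (Fin d) (Fin d) ℂ) (hX : Xᴴ = -X) :
    ‖NormedSpace.exp X‖ ≤ 1 := by
  rcases Nat.eq_zero_or_pos d with hd | hd
  · subst hd
    have h0 : NormedSpace.exp X = 0 := by ext i j; exact i.elim0
    rw [h0, norm_zero]; exact zero_le_one
  · have : Nonempty (Fin d) := ⟨⟨0, hd⟩⟩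
    have : Nontrivial (Matrix (Fin d) (Fin d) ℂ) := inferInstance
    refine le_of_eq (CStarRing.norm_of_mem_unitary ?_)
    let +nondep : NormedAlgebra ℚ (Matrix (Fin d) (Fin d) ℂ) := .restrictScalars ℚ ℂ _
    exact NormedSpace.exp_mem_unitary_of_mem_skewAdjoint
      (by simpa [skewAdjoint.mem_iff, Matrix.star_eq_conjTranspose] using hX)

private lemma smul_skew (s : ℝ) (X : Matrix (Fin d) (Fin d) ℂ) (hX : Xᴴ = -X) :
    (s • X)ᴴ = -(s • X) := by
  rw [Matrix.conjTranspose_smul, star_trivial, hX, smul_neg]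

private lemma exp_sub_exp_norm_le (X Y : Matrix (Fin d) (Fin d) ℂ)
    (hX : Xᴴ = -X) (hY : Yᴴ = -Y) :
    ‖NormedSpace.exp X - NormedSpace.exp Y‖ ≤ ‖X - Y‖ := by
  set f : ℝ → Matrix (Fin d) (Fin d) ℂ :=
    fun u => NormedSpace.exp (u • X) * NormedSpace.exp ((1 - u) • Y) with hf_def
  set f' : ℝ → Matrix (Fin d) (Fin d) ℂ :=
    fun u => NormedSpace.exp (u • X) * ((X - Y) * NormedSpace.exp ((1 - u) • Y)) with hf'_def
  have hderiv : ∀ u : ℝ, HasDerivAt f (f' u) u := by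
    intro u
    have h1 : HasDerivAt (fun u : ℝ => NormedSpace.exp (u • X))
        (NormedSpace.exp (u • X) * X) u := hasDerivAt_exp_smul_const X u
    have h3 : HasDerivAt (fun u : ℝ => (1 : ℝ) - u) (-1) u := (hasDerivAt_id u).const_sub 1
    have h4' := HasDerivAt.scomp_of_eq (x := u)
      (hasDerivAt_exp_smul_const (𝕂 := ℝ) Y (1 - u)) h3 rfl
    have h4 : HasDerivAt (fun u : ℝ => NormedSpace.exp ((1 - u) • Y))
        ((-1 : ℝ) • (NormedSpace.exp ((1 - u) • Y) * Y)) u := h4'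
    have h5 := h1.mul h4
    refine h5.congr_deriv ?_
    have hcomm : Commute Y (NormedSpace.exp ((1 - u) • Y)) :=
      (((Commute.refl Y).smul_right (1 - u)).exp_right)
    rw [hf'_def]
    simp only [neg_smul, one_smul, mul_neg]
    rw [← hcomm.eq]
    noncomm_ring
  have hbound : ∀ u ∈ Set.Ico (0:ℝ) 1, ‖f' u‖ ≤ ‖X - Y‖ := by
    intro u _
    have e1 : ‖NormedSpace.exp (u • X)‖ ≤ 1 := by
      exact exp_norm_le_one _ (smul_skew u X hX)
    have e2 : ‖NormedSpace.exp ((1 - u) • Y)‖ ≤ 1 := by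
      exact exp_norm_le_one _ (smul_skew (1 - u) Y hY)
    calc ‖f' u‖ ≤ ‖NormedSpace.exp (u • X)‖ * ‖(X - Y) * NormedSpace.exp ((1 - u) • Y)‖ :=
          norm_mul_le _ _
      _ ≤ 1 * (‖X - Y‖ * 1) := by
          refine mul_le_mul e1 ?_ (norm_nonneg _) zero_le_one
          calc ‖(X - Y) * NormedSpace.exp ((1 - u) • Y)‖
              ≤ ‖X - Y‖ * ‖NormedSpace.exp ((1 - u) • Y)‖ := norm_mul_le _ _
            _ ≤ ‖X - Y‖ * 1 := by
                exact mul_le_mul_of_nonneg_left e2 (norm_nonneg _)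
      _ = ‖X - Y‖ := by ring
  have key := norm_image_sub_le_of_norm_deriv_le_segment'
    (f := f) (f' := f') (C := ‖X - Y‖) (a := 0) (b := 1)
    (fun u hu => (hderiv u).hasDerivWithinAt) hbound 1 (Set.right_mem_Icc.mpr zero_le_one)
  have hf1 : f 1 = NormedSpace.exp X := by
    simp [hf_def, NormedSpace.exp_zero]
  have hf0 : f 0 = NormedSpace.exp Y := by
    simp [hf_def, NormedSpace.exp_zero]
  rw [hf1, hf0] at key
  simpa using key

private lemma norm_list_prod_le_one {R : Type*} [NormedRing R] (hone : ‖(1 : R)‖ ≤ 1) :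
    ∀ (L : List R), (∀ x ∈ L, ‖x‖ ≤ 1) → ‖L.prod‖ ≤ 1
  | [], _ => by simpa using hone
  | x :: L, hL => by
    rw [List.prod_cons]
    calc ‖x * L.prod‖ ≤ ‖x‖ * ‖L.prod‖ := norm_mul_le _ _
      _ ≤ 1 := mul_le_one₀ (hL x List.mem_cons_self) (norm_nonneg _)
          (norm_list_prod_le_one hone L (fun z hz => hL z (List.mem_cons_of_mem x hz)))

private lemma norm_list_prod_sub_prod {R : Type*} [NormedRing R] (hone : ‖(1 : R)‖ ≤ 1) :
    ∀ (L : List (R × R)), (∀ p ∈ L, ‖p.1‖ ≤ 1) → (∀ p ∈ L, ‖p.2‖ ≤ 1) →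
      ‖(L.map Prod.fst).prod - (L.map Prod.snd).prod‖ ≤ (L.map fun p => ‖p.1 - p.2‖).sum
  | [], _, _ => by simp
  | p :: L, h1, h2 => by
    simp only [List.map_cons, List.prod_cons, List.sum_cons]
    set P := (L.map Prod.fst).prod
    set Q := (L.map Prod.snd).prod
    have hsplit : p.1 * P - p.2 * Q = p.1 * (P - Q) + (p.1 - p.2) * Q := by
      rw [mul_sub, sub_mul]; abel
    have hP1 : ‖p.1‖ ≤ 1 := h1 p List.mem_cons_self
    have hQle : ‖Q‖ ≤ 1 := norm_list_prod_le_one hone _ (by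
      intro z hz
      obtain ⟨q, hq, rfl⟩ := List.mem_map.mp hz
      exact h2 q (List.mem_cons_of_mem p hq))
    have ih := norm_list_prod_sub_prod hone L
      (fun q hq => h1 q (List.mem_cons_of_mem p hq))
      (fun q hq => h2 q (List.mem_cons_of_mem p hq))
    calc ‖p.1 * P - p.2 * Q‖ = ‖p.1 * (P - Q) + (p.1 - p.2) * Q‖ := by rw [hsplit]
      _ ≤ ‖p.1 * (P - Q)‖ + ‖(p.1 - p.2) * Q‖ := norm_add_le _ _
      _ ≤ ‖p.1‖ * ‖P - Q‖ + ‖p.1 - p.2‖ * ‖Q‖ := add_le_add (norm_mul_le _ _) (norm_mul_le _ _)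
      _ ≤ 1 * ‖P - Q‖ + ‖p.1 - p.2‖ * 1 := add_le_add
          (mul_le_mul_of_nonneg_right hP1 (norm_nonneg _))
          (mul_le_mul_of_nonneg_left hQle (norm_nonneg _))
      _ = ‖P - Q‖ + ‖p.1 - p.2‖ := by ring
      _ ≤ (L.map fun p => ‖p.1 - p.2‖).sum + ‖p.1 - p.2‖ := add_le_add_left ih _
      _ = ‖p.1 - p.2‖ + (L.map fun p => ‖p.1 - p.2‖).sum := by ring


/-- **Proposition 3 (Gauss–Legendre quadrature error for CFQMs).**
Let `a_j` be skew-Hermitian complex `d×d` matrices with `‖a_j‖ ≤ c`, `0 < h < 2`, and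
`A(t) = Σ_j a_j t^j` for `|t| ≤ h/2`. For `g = 0,…,s−1` let
`G_g = (1/h^g) ∫_{−h/2}^{h/2} t^g A(t) dt` and let `Q_g` be skew-Hermitian quadrature
approximations satisfying the classical Gauss–Legendre remainder formula
`G_g − Q_g = [h^{2s+1}(s!)⁴/((2s+1)((2s)!)³)] f_g^{(2s)}(ξ_g)` for some `|ξ_g| < h/2`,
where `f_g(t) = (1/h^g) t^g A(t)`. Then, in the operator norm,
`‖Π exp(Σ_g y_{i,g} G_g) − Π exp(Σ_g y_{i,g} Q_g)‖ ≤ Σᵢ Σ_g |y_{i,g}| ‖G_g − Q_g‖`, and this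
is at most `[h^{2s+1}(s!)⁴/((2s+1)((2s)!)³)] Σᵢ Σ_g (|y_{i,g}|/h^g) Σ_j ((j+2s)!/j!)(h/2)^j c`. -/
theorem cfqm_quadrature_error (d : ℕ) (a : ℕ → Matrix (Fin d) (Fin d) ℂ)
    (ha : ∀ j, (a j)ᴴ = -a j) (c : ℝ) (hac : ∀ j, ‖a j‖ ≤ c)
    (h : ℝ) (h0 : 0 < h) (h2 : h < 2)
    (A : ℝ → Matrix (Fin d) (Fin d) ℂ)
    (hA : ∀ t : ℝ, |t| ≤ h / 2 → HasSum (fun j : ℕ => t ^ j • a j) (A t))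
    (s m : ℕ) (hs : 1 ≤ s) (hm : 1 ≤ m)
    (G Q : Fin s → Matrix (Fin d) (Fin d) ℂ)
    (hG : ∀ g : Fin s,
      G g = (1 / h ^ (g : ℕ)) • ∫ t in (-(h / 2))..(h / 2), t ^ (g : ℕ) • A t)
    (hQskew : ∀ g : Fin s, (Q g)ᴴ = -Q g)
    (hrem : ∀ g : Fin s, ∃ ξ : ℝ, |ξ| < h / 2 ∧
      G g - Q g =
        (h ^ (2 * s + 1) * ((s ! : ℝ)) ^ 4 / ((2 * s + 1) * ((2 * s)! : ℝ) ^ 3)) •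
          iteratedDeriv (2 * s)
            (fun t : ℝ => (1 / h ^ (g : ℕ)) • (t ^ (g : ℕ) • A t)) ξ)
    (y : Fin m → Fin s → ℝ) :
    ‖(List.ofFn fun i => NormedSpace.exp (∑ g, y i g • G g)).prod -
        (List.ofFn fun i => NormedSpace.exp (∑ g, y i g • Q g)).prod‖ ≤
      ∑ i, ∑ g, |y i g| * ‖G g - Q g‖ ∧
    ∑ i, ∑ g, |y i g| * ‖G g - Q g‖ ≤
      (h ^ (2 * s + 1) * ((s ! : ℝ)) ^ 4 / ((2 * s + 1) * ((2 * s)! : ℝ) ^ 3)) *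
        ∑ i, ∑ g, (|y i g| / h ^ (g : ℕ)) *
          ∑' j : ℕ, (((j + 2 * s)! : ℝ) / (j ! : ℝ)) * (h / 2) ^ j * c := by
  have hc0 : 0 ≤ c := le_trans (norm_nonneg _) (hac 0)
  set coeff : ℝ := h ^ (2 * s + 1) * ((s ! : ℝ)) ^ 4 / ((2 * s + 1) * ((2 * s)! : ℝ) ^ 3)
    with hcoeff_def
  have hcoeff0 : 0 ≤ coeff := by
    apply div_nonneg
    · positivity
    · positivity
  have hx0 : (0:ℝ) < h / 2 := by linarith
  have hx1 : h / 2 < 1 := by linarith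
  set T : ℝ := ∑' j : ℕ, (((j + 2 * s)! : ℝ) / (j ! : ℝ)) * (h / 2) ^ j * c with hT_def
  have hT0 : 0 ≤ T := tsum_nonneg (fun j => by positivity)
  -- scaled coefficients
  set a' : Fin s → ℕ → Matrix (Fin d) (Fin d) ℂ :=
    fun g j => (1 / h ^ (g : ℕ)) • a j with ha'_def
  have hpowg : ∀ g : Fin s, (0:ℝ) < h ^ (g : ℕ) := fun g => pow_pos h0 _
  have hac' : ∀ g : Fin s, ∀ j, ‖a' g j‖ ≤ c * (1 / h ^ (g : ℕ)) := by
    intro g j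
    have he : ‖a' g j‖ = (1 / h ^ (g : ℕ)) * ‖a j‖ := by
      rw [ha'_def, norm_smul, Real.norm_eq_abs,
        abs_of_nonneg (by positivity : (0:ℝ) ≤ 1 / h ^ (g:ℕ))]
    rw [he, mul_comm c]
    exact mul_le_mul_of_nonneg_left (hac j) (by positivity)
  have ha'skew : ∀ g : Fin s, ∀ j, (a' g j)ᴴ = -(a' g j) :=
    fun g j => smul_skew _ _ (ha j)
  -- the key decomposition
  have key : ∀ g : Fin s, ∃ D : Matrix (Fin d) (Fin d) ℂ,
      G g - Q g = coeff • D ∧ Dᴴ = -D ∧ ‖D‖ ≤ (1 / h ^ (g : ℕ)) * T := by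
    intro g
    obtain ⟨ξ, hξ, hGQ⟩ := hrem g
    refine ⟨Fser (a' g) (g : ℕ) (2 * s) ξ, ?_, Fser_skew _ (ha'skew g) _ _ _, ?_⟩
    · rw [hGQ]
      congr 1
      have heqon : ∀ t : ℝ, |t| < h / 2 →
          (1 / h ^ (g : ℕ)) • (t ^ (g : ℕ) • A t) = Fser (a' g) (g : ℕ) 0 t := by
        intro t ht
        have hs1 := ((hA t ht.le).const_smul (t ^ (g : ℕ))).const_smul (1 / h ^ (g : ℕ))
        have hfun : ∀ j : ℕ,
            (1 / h ^ (g : ℕ)) • (t ^ (g : ℕ) • (t ^ j • a j))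
              = ((((g : ℕ) + j).descFactorial 0 : ℝ) * t ^ ((g : ℕ) + j - 0)) • a' g j := by
          intro j
          simp only [ha'_def, Nat.descFactorial_zero, Nat.cast_one, one_mul, Nat.sub_zero]
          rw [smul_smul (t ^ (g : ℕ)) (t ^ j), ← pow_add, smul_comm]
        rw [show (fun i : ℕ => (1 / h ^ (g:ℕ)) • t ^ (g:ℕ) • t ^ i • a i)
          = (fun j : ℕ => ((((g : ℕ) + j).descFactorial 0 : ℝ) * t ^ ((g : ℕ) + j - 0)) • a' g j)
          from funext hfun] at hs1
        rw [Fser]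
        exact hs1.tsum_eq.symm
      have hev : (fun t : ℝ => (1 / h ^ (g : ℕ)) • (t ^ (g : ℕ) • A t))
          =ᶠ[nhds ξ] Fser (a' g) (g : ℕ) 0 := by
        filter_upwards [Metric.isOpen_ball.mem_nhds
          (by rw [mem_ball_zero_iff, Real.norm_eq_abs]; exact hξ : ξ ∈ Metric.ball (0:ℝ) (h/2))]
          with x hx
        exact heqon x (by rwa [mem_ball_zero_iff, Real.norm_eq_abs] at hx)
      rw [Filter.EventuallyEq.iteratedDeriv_eq (2 * s) hev]
      exact iteratedDeriv_Fser (a' g) (c * (1 / h ^ (g : ℕ))) (hac' g) (h/2) hx0 hx1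
        (g : ℕ) (2 * s) ξ hξ
    · have hb := Fser_norm_bound (a' g) (c * (1 / h ^ (g : ℕ))) (hac' g) (h/2) hx0 hx1
        (le_of_lt hξ) (g : ℕ) s (by have := g.2; omega)
      refine le_trans hb (le_of_eq ?_)
      rw [hT_def, mul_comm ((1:ℝ) / h ^ (g:ℕ)), ← tsum_mul_right]
      exact tsum_congr (fun k => by ring)
  choose D hD hDskew hDnorm using key
  have hGQskew : ∀ g : Fin s, (G g - Q g)ᴴ = -(G g - Q g) := by
    intro g
    rw [hD g]
    exact smul_skew _ _ (hDskew g)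
  have hGskew : ∀ g : Fin s, (G g)ᴴ = -(G g) := by
    intro g
    have hGg : G g = (G g - Q g) + Q g := (sub_add_cancel _ _).symm
    rw [hGg, Matrix.conjTranspose_add, hGQskew g, hQskew g]
    abel
  have hGQnorm : ∀ g : Fin s, ‖G g - Q g‖ ≤ coeff * ((1 / h ^ (g : ℕ)) * T) := by
    intro g
    rw [hD g, norm_smul, Real.norm_eq_abs, abs_of_nonneg hcoeff0]
    exact mul_le_mul_of_nonneg_left (hDnorm g) hcoeff0
  constructor
  · -- first inequality
    have hone : ‖(1 : Matrix (Fin d) (Fin d) ℂ)‖ ≤ 1 := by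
      have := exp_norm_le_one (0 : Matrix (Fin d) (Fin d) ℂ) (by simp)
      simpa [NormedSpace.exp_zero] using this
    set X : Fin m → Matrix (Fin d) (Fin d) ℂ := fun i => ∑ g, y i g • G g with hX_def
    set Y : Fin m → Matrix (Fin d) (Fin d) ℂ := fun i => ∑ g, y i g • Q g with hY_def
    have hXskew : ∀ i, (X i)ᴴ = -(X i) := by
      intro i
      rw [hX_def, Matrix.conjTranspose_sum, ← Finset.sum_neg_distrib]
      exact Finset.sum_congr rfl (fun g _ => smul_skew _ _ (hGskew g))
    have hYskew : ∀ i, (Y i)ᴴ = -(Y i) := by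
      intro i
      rw [hY_def, Matrix.conjTranspose_sum, ← Finset.sum_neg_distrib]
      exact Finset.sum_congr rfl (fun g _ => smul_skew _ _ (hQskew g))
    have hlist := norm_list_prod_sub_prod hone
      (List.ofFn (fun i => (NormedSpace.exp (X i), NormedSpace.exp (Y i))))
      (by
        intro p hp
        rw [List.mem_ofFn] at hp
        obtain ⟨i, rfl⟩ := hp
        exact exp_norm_le_one _ (hXskew i))
      (by
        intro p hp
        rw [List.mem_ofFn] at hp
        obtain ⟨i, rfl⟩ := hp
        exact exp_norm_le_one _ (hYskew i))
    rw [List.map_ofFn, List.map_ofFn, List.map_ofFn, List.sum_ofFn] at hlist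
    refine le_trans hlist ?_
    refine le_trans (Finset.sum_le_sum (fun i (_ : i ∈ Finset.univ) =>
      exp_sub_exp_norm_le (X i) (Y i) (hXskew i) (hYskew i))) ?_
    refine Finset.sum_le_sum (fun i _ => ?_)
    have hXY : X i - Y i = ∑ g, y i g • (G g - Q g) := by
      rw [hX_def, hY_def, ← Finset.sum_sub_distrib]
      exact Finset.sum_congr rfl (fun g _ => (smul_sub _ _ _).symm)
    rw [hXY]
    refine le_trans (norm_sum_le _ _) (le_of_eq ?_)
    exact Finset.sum_congr rfl (fun g _ => by rw [norm_smul, Real.norm_eq_abs])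
  · -- second inequality
    calc ∑ i, ∑ g, |y i g| * ‖G g - Q g‖
        ≤ ∑ i : Fin m, ∑ g, coeff * ((|y i g| / h ^ (g : ℕ)) * T) := by
          refine Finset.sum_le_sum (fun i _ => Finset.sum_le_sum (fun g _ => ?_))
          refine le_trans (mul_le_mul_of_nonneg_left (hGQnorm g) (abs_nonneg _)) (le_of_eq ?_)
          field_simp
      _ = coeff * ∑ i, ∑ g, (|y i g| / h ^ (g : ℕ)) * T := by
          rw [Finset.mul_sum]
          exact Finset.sum_congr rfl (fun i _ => (Finset.mul_sum _ _ _).symm)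
end
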